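/- arXiv:1812.07956 — 6 statements merged into one kernel-verified Lean document; each statement's English description precedes it below -/
import Mathlib

section
/- Let T > 0 be a fixed time horizon and assume h(w₀) = 0. Then there exist constants C > 0 and α₀ > 0 (depending on h, R, w₀ and T but not on α) such that for every α ≥ α₀, sup_{t ∈ [0,T]} ‖w_α(t) − w₀‖ ≤ C/α. -/
open scoped RealInnerProductSpace NNReal

/-!
Along a gradient flow `γ' = -∇f(γ)` the energy identity `(f ∘ γ)' = -‖γ'‖²` holds, and Young's
inequality `‖γ'‖ ≤ (c ‖γ'‖² + 1/c) / 2` turns it into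
`‖γ t - γ 0‖ ≤ (c (f (γ 0) - f (γ t)) + t / c) / 2`. For `f = F_α` and `c = α` we have
`F_α w₀ = R 0 / α²` because `h w₀ = 0`, and `F_α ≥ 0`, so the displacement is at most
`(R 0 + t) / (2α)`.
-/

theorem two_mul_le_mul_sq_add_inv {c : ℝ} (hc : 0 < c) (x : ℝ) : 2 * x ≤ c * x ^ 2 + c⁻¹ := by
  have hsq : c * x ^ 2 + c⁻¹ - 2 * x = c⁻¹ * (c * x - 1) ^ 2 := by field_simp; ring
  have := mul_nonneg (inv_nonneg.2 hc.le) (sq_nonneg (c * x - 1))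
  linarith

section GradientFlow

variable {E : Type*} [NormedAddCommGroup E] [InnerProductSpace ℝ E] [CompleteSpace E]
  {f : E → ℝ} {γ : ℝ → E} {t : ℝ}

theorem hasDerivAt_comp_of_hasDerivAt_neg_gradient (hf : DifferentiableAt ℝ f (γ t))
    (hγ : HasDerivAt γ (-gradient f (γ t)) t) :
    HasDerivAt (f ∘ γ) (-‖gradient f (γ t)‖ ^ 2) t := by
  have := hf.hasGradientAt.hasFDerivAt.comp_hasDerivAt t hγ
  rwa [InnerProductSpace.toDual_apply_apply, inner_neg_right, real_inner_self_eq_norm_sq] at this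

theorem norm_sub_le_of_gradientFlow (hf : Differentiable ℝ f)
    (hγ : ∀ s, 0 ≤ s → HasDerivAt γ (-gradient f (γ s)) s) {c : ℝ} (hc : 0 < c) (ht : 0 ≤ t) :
    ‖γ t - γ 0‖ ≤ (c * (f (γ 0) - f (γ t)) + t / c) / 2 := by
  set B : ℝ → ℝ := fun s => (c * (f (γ 0) - f (γ s)) + s / c) / 2
  have hB : ∀ s, 0 ≤ s → HasDerivAt B ((c * ‖gradient f (γ s)‖ ^ 2 + c⁻¹) / 2) s := by
    intro s hs
    have hE := hasDerivAt_comp_of_hasDerivAt_neg_gradient (hf _) (hγ s hs)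
    have := (((hasDerivAt_const s (f (γ 0))).sub hE).const_mul c).add
      ((hasDerivAt_id s).div_const c)
    exact (this.div_const 2).congr_deriv (by ring)
  refine image_norm_le_of_norm_deriv_right_le_deriv_boundary' (f := fun s => γ s - γ 0)
    (fun s hs => ((hγ s hs.1).sub_const _).continuousAt.continuousWithinAt)
    (fun s hs => ((hγ s hs.1).sub_const _).hasDerivWithinAt) (by simp [B])
    (fun s hs => (hB s hs.1).continuousAt.continuousWithinAt)
    (fun s hs => (hB s hs.1).hasDerivWithinAt) (fun s _ => ?_) ⟨ht, le_rfl⟩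
  rw [norm_neg]
  linarith [two_mul_le_mul_sq_add_inv hc ‖gradient f (γ s)‖]

end GradientFlow

theorem lazy_general_param_bound_general
    {p : ℕ} {H : Type*} [NormedAddCommGroup H] [InnerProductSpace ℝ H]
    (h : EuclideanSpace ℝ (Fin p) → H)
    (hdiff : Differentiable ℝ h)
    (R : H → ℝ) (hRnonneg : ∀ y, 0 ≤ R y) (hRdiff : Differentiable ℝ R)
    (w₀ : EuclideanSpace ℝ (Fin p)) (h0 : h w₀ = 0)
    (w : ℝ → ℝ → EuclideanSpace ℝ (Fin p))
    (hw0 : ∀ α : ℝ, 0 < α → w α 0 = w₀)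
    (hwflow : ∀ α : ℝ, 0 < α → ∀ t : ℝ, 0 ≤ t →
      HasDerivAt (w α) (-(gradient (fun u => R (α • h u) / α ^ 2) (w α t))) t)
    (T : ℝ) (hT : 0 < T) :
    ∃ C > 0, ∃ α₀ > 0, ∀ α : ℝ, α₀ ≤ α → ∀ t ∈ Set.Icc (0 : ℝ) T,
      ‖w α t - w₀‖ ≤ C / α := by
  refine ⟨(R 0 + T) / 2, by linarith [hRnonneg 0], 1, one_pos, fun α hα t ⟨ht0, htT⟩ => ?_⟩
  have hα : 0 < α := one_pos.trans_le hα
  have hF : Differentiable ℝ fun u => R (α • h u) / α ^ 2 := by fun_prop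
  have key := norm_sub_le_of_gradientFlow hF (hwflow α hα) hα ht0
  rw [hw0 α hα, h0, smul_zero] at key
  have hFt : 0 ≤ R (α • h (w α t)) / α ^ 2 := div_nonneg (hRnonneg _) (sq_nonneg α)
  calc ‖w α t - w₀‖ ≤ (α * (R 0 / α ^ 2 - R (α • h (w α t)) / α ^ 2) + t / α) / 2 := key
    _ ≤ (α * (R 0 / α ^ 2) + T / α) / 2 := by gcongr; linarith
    _ = (R 0 + T) / 2 / α := by field_simp

/-- **Theorem 2.1 (General lazy training), first bound.**
If `h w₀ = 0`, then for a fixed time horizon `T > 0` there are constants `C > 0` and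
`α₀ > 0` (independent of `α`) such that for all `α ≥ α₀`,
`sup_{t ∈ [0,T]} ‖w_α(t) − w₀‖ ≤ C / α`. -/
theorem lazy_general_param_bound
    {p : ℕ} {H : Type*} [NormedAddCommGroup H] [InnerProductSpace ℝ H] [CompleteSpace H]
    (h : EuclideanSpace ℝ (Fin p) → H)
    (hdiff : Differentiable ℝ h)
    (hDhLip : LocallyLipschitz (fun u => fderiv ℝ h u))
    (R : H → ℝ) (hRnonneg : ∀ y, 0 ≤ R y) (hRdiff : Differentiable ℝ R)
    (LR : ℝ≥0) (hRgrad : LipschitzWith LR (fun y => gradient R y))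
    (w₀ : EuclideanSpace ℝ (Fin p)) (h0 : h w₀ = 0)
    (w : ℝ → ℝ → EuclideanSpace ℝ (Fin p))
    (hw0 : ∀ α : ℝ, 0 < α → w α 0 = w₀)
    (hwflow : ∀ α : ℝ, 0 < α → ∀ t : ℝ, 0 ≤ t →
      HasDerivAt (w α) (-(gradient (fun u => R (α • h u) / α ^ 2) (w α t))) t)
    (T : ℝ) (hT : 0 < T) :
    ∃ C > 0, ∃ α₀ > 0, ∀ α : ℝ, α₀ ≤ α → ∀ t ∈ Set.Icc (0 : ℝ) T,
      ‖w α t - w₀‖ ≤ C / α :=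
  lazy_general_param_bound_general h hdiff R hRnonneg hRdiff w₀ h0 w hw0 hwflow T hT
end

section
/- Let T > 0 be a fixed time horizon and assume h(w₀) = 0. Then there exist constants C > 0 and α₀ > 0 (depending on h, R, w₀ and T but not on α) such that for every α ≥ α₀, sup_{t ∈ [0,T]} ‖w_α(t) − w̄_α(t)‖ ≤ C/α². -/
/-!
On a ball around `w₀` where `‖Dh‖ ≤ M`, the gradient of `F_α` is at most
`LR M² ‖w - w₀‖ + O(1/α)`, so Grönwall's inequality keeps `w_α` within `O(1/α)` of `w₀` on
`[0, T]`; since `Dh` is only locally Lipschitz, the Grönwall argument is localized to the ball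
where these bounds hold. In a ball of radius `ρ = O(1/α)`, `Dh` and `h` differ from their
linearizations by `O(ρ)` and `O(ρ²)`, so `∇F_α` and `∇F̄_α` differ by `O(1/α²)` there, while
`∇F̄_α` is globally Lipschitz with constant `LR ‖Dh(w₀)‖²`. Hence `w_α` is an
`O(1/α²)`-approximate trajectory of `-∇F̄_α`, and comparing it with the exact trajectory `w̄_α`
by Grönwall gives the bound.
-/

open scoped RealInnerProductSpace NNReal

open Set Metric Filter Topology InnerProductSpace

open scoped Gradient

section Gronwall

theorem gronwallBound_zero_eq_mul (K ε x : ℝ) :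
    gronwallBound 0 K ε x = ε * gronwallBound 0 K 1 x := by
  unfold gronwallBound
  split_ifs <;> ring

theorem gronwallBound_zero_le {K ε x T : ℝ} (hK : 0 ≤ K) (hε : 0 ≤ ε) (hx : x ≤ T) :
    gronwallBound 0 K ε x ≤ ε * gronwallBound 0 K 1 T := by
  rw [gronwallBound_zero_eq_mul]
  exact mul_le_mul_of_nonneg_left (gronwallBound_mono le_rfl zero_le_one hK hx) hε

theorem gronwallBound_nonneg {δ K ε x : ℝ} (hδ : 0 ≤ δ) (hK : 0 ≤ K) (hε : 0 ≤ ε) (hx : 0 ≤ x) :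
    0 ≤ gronwallBound δ K ε x :=
  hδ.trans <| (gronwallBound_x0 δ K ε).symm.le.trans (gronwallBound_mono hδ hε hK hx)

variable {E : Type*} [NormedAddCommGroup E] [NormedSpace ℝ E]

theorem norm_le_gronwallBound_of_norm_deriv_right_le_of_norm_lt {f f' : ℝ → E}
    {δ K ε r a b : ℝ} (hδ : 0 ≤ δ) (hK : 0 ≤ K) (hε : 0 ≤ ε)
    (hf : ContinuousOn f (Icc a b)) (hf' : ∀ x ∈ Ico a b, HasDerivWithinAt f (f' x) (Ici x) x)
    (ha : ‖f a‖ ≤ δ) (bound : ∀ x ∈ Ico a b, ‖f x‖ < r → ‖f' x‖ ≤ K * ‖f x‖ + ε)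
    (hsmall : gronwallBound δ K ε (b - a) < r) :
    ∀ x ∈ Icc a b, ‖f x‖ ≤ gronwallBound δ K ε (x - a) := by
  intro x hx
  have hr : ∀ᶠ ε' in 𝓝 ε, gronwallBound δ K ε' (b - a) < r :=
    (gronwallBound_continuous_ε δ K (b - a)).continuousAt.eventually (gt_mem_nhds hsmall)
  have hbound : ∀ᶠ ε' in 𝓝[>] ε, ‖f x‖ ≤ gronwallBound δ K ε' (x - a) := by
    filter_upwards [nhdsWithin_le_nhds hr, self_mem_nhdsWithin] with ε' hε'r hεε'
    have hεε' : ε < ε' := hεε'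
    refine image_norm_le_of_norm_deriv_right_lt_deriv_boundary hf hf'
      (by rwa [sub_self, gronwallBound_x0]) (fun y => hasDerivAt_gronwallBound_shift δ K ε' y a)
      (fun y hy hfy => ?_) hx
    -- at a contact point the solution is still inside the region where `bound` applies
    have hy_lt : ‖f y‖ < r := hfy ▸ (gronwallBound_mono hδ (hε.trans hεε'.le) hK
      (by linarith [hy.2] : y - a ≤ b - a)).trans_lt hε'r
    calc ‖f' y‖ ≤ K * ‖f y‖ + ε := bound y hy hy_lt
      _ < K * gronwallBound δ K ε' (y - a) + ε' := by rw [hfy]; linarith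
  exact ge_of_tendsto
    ((gronwallBound_continuous_ε δ K (x - a)).continuousAt.continuousWithinAt) hbound

end Gronwall

theorem LipschitzWith.norm_le_norm_zero_add {E F : Type*} [SeminormedAddCommGroup E]
    [SeminormedAddCommGroup F] {K : ℝ≥0} {f : E → F} (hf : LipschitzWith K f) (x : E) :
    ‖f x‖ ≤ ‖f 0‖ + K * ‖x‖ := by
  have := hf.dist_le_mul x 0
  rw [dist_eq_norm, dist_eq_norm, sub_zero] at this
  linarith [norm_le_norm_add_norm_sub' (f x) (f 0)]

theorem LocallyLipschitz.exists_lipschitzOnWith_closedBall {E F : Type*} [PseudoMetricSpace E]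
    [PseudoMetricSpace F] {f : E → F} (hf : LocallyLipschitz f) (x : E) :
    ∃ K, ∃ r > 0, LipschitzOnWith K f (closedBall x r) := by
  obtain ⟨K, t, ht, hK⟩ := hf x
  obtain ⟨r, hr, hsub⟩ := nhds_basis_closedBall.mem_iff.1 ht
  exact ⟨K, r, hr, hK.mono hsub⟩

theorem LipschitzOnWith.norm_le_of_mem_closedBall {E F : Type*} [PseudoMetricSpace E]
    [SeminormedAddCommGroup F] {K : ℝ≥0} {f : E → F} {x y : E} {r : ℝ}
    (hf : LipschitzOnWith K f (closedBall x r)) (hy : y ∈ closedBall x r) :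
    ‖f y‖ ≤ ‖f x‖ + K * r := by
  have hx : x ∈ closedBall x r := mem_closedBall_self (dist_nonneg.trans hy)
  have := (hf.dist_le_mul y hy x hx).trans (mul_le_mul_of_nonneg_left hy K.coe_nonneg)
  rw [dist_eq_norm] at this
  linarith [norm_le_norm_add_norm_sub' (f y) (f x)]

section Model

variable {E H : Type*} [NormedAddCommGroup E] [NormedSpace ℝ E]
  [NormedAddCommGroup H] [NormedSpace ℝ H]

noncomputable def linearization (h : E → H) (w₀ u : E) : H := h w₀ + fderiv ℝ h w₀ (u - w₀)

noncomputable def scaledObjective (R : H → ℝ) (α : ℝ) (φ : E → H) (u : E) : ℝ :=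
  R (α • φ u) / α ^ 2

theorem hasFDerivAt_linearization (h : E → H) (w₀ u : E) :
    HasFDerivAt (linearization h w₀) (fderiv ℝ h w₀) u := by
  have := ((fderiv ℝ h w₀).hasFDerivAt.comp u ((hasFDerivAt_id u).sub_const w₀)).const_add (h w₀)
  rwa [ContinuousLinearMap.comp_id] at this

theorem linearization_sub_linearization (h : E → H) (w₀ u v : E) :
    linearization h w₀ u - linearization h w₀ v = fderiv ℝ h w₀ (u - v) := by
  simp only [linearization, add_sub_add_left_eq_sub, ← map_sub, sub_sub_sub_cancel_right]

theorem norm_sub_linearization_le {h : E → H} {w₀ u : E} {K : ℝ≥0} {r : ℝ}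
    (hd : ∀ x ∈ closedBall w₀ r, DifferentiableAt ℝ h x)
    (hK : LipschitzOnWith K (fderiv ℝ h) (closedBall w₀ r)) (hu : u ∈ closedBall w₀ r) :
    ‖h u - linearization h w₀ u‖ ≤ K * ‖u - w₀‖ ^ 2 := by
  have hsub : closedBall w₀ ‖u - w₀‖ ⊆ closedBall w₀ r :=
    closedBall_subset_closedBall (by rwa [← dist_eq_norm])
  have hw₀ : w₀ ∈ closedBall w₀ ‖u - w₀‖ := mem_closedBall_self (norm_nonneg _)
  have hmvt := (convex_closedBall w₀ ‖u - w₀‖).norm_image_sub_le_of_norm_fderiv_le'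
    (φ := fderiv ℝ h w₀) (C := K * ‖u - w₀‖) (fun x hx => hd x (hsub hx)) (fun x hx => ?_) hw₀
    (mem_closedBall.2 (dist_eq_norm u w₀).le)
  · rw [linearization, ← sub_sub, sq, ← mul_assoc]
    exact hmvt
  · rw [← dist_eq_norm]
    exact (hK.dist_le_mul x (hsub hx) w₀ (hsub hw₀)).trans
      (mul_le_mul_of_nonneg_left hx K.coe_nonneg)

theorem hasFDerivAt_scaledObjective {R : H → ℝ} {φ : E → H} {φ' : E →L[ℝ] H} {α : ℝ} {u : E}
    (hα : α ≠ 0) (hR : DifferentiableAt ℝ R (α • φ u)) (hφ : HasFDerivAt φ φ' u) :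
    HasFDerivAt (scaledObjective R α φ) (α⁻¹ • (fderiv ℝ R (α • φ u)).comp φ') u := by
  have hcomp : HasFDerivAt (fun x => R (α • φ x)) ((fderiv ℝ R (α • φ u)).comp (α • φ')) u :=
    hR.hasFDerivAt.comp u (hφ.const_smul α)
  have hscaled := hcomp.const_smul (α ^ 2)⁻¹
  have hfun : ((α ^ 2)⁻¹ • fun x => R (α • φ x)) = scaledObjective R α φ := by
    ext x
    rw [Pi.smul_apply, scaledObjective, smul_eq_mul, inv_mul_eq_div]
  rw [hfun] at hscaled
  refine hscaled.congr_fderiv ?_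
  ext v
  simp only [ContinuousLinearMap.comp_smulₛₗ, Real.ringHom_apply, smul_apply,
    ContinuousLinearMap.comp_apply, smul_eq_mul]
  field_simp

theorem norm_fderiv_smul_le_of_mem_closedBall {R : H → ℝ} {L : ℝ≥0} {h : E → H} {w₀ u : E} {α r M : ℝ}
    (hα : 0 < α) (hRL : LipschitzWith L (fderiv ℝ R))
    (hd : Differentiable ℝ h) (h0 : h w₀ = 0)
    (hM : ∀ x ∈ closedBall w₀ r, ‖fderiv ℝ h x‖ ≤ M) (hu : u ∈ closedBall w₀ r) :
    ‖fderiv ℝ R (α • h u)‖ ≤ ‖fderiv ℝ R 0‖ + L * α * M * ‖u - w₀‖ := by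
  have hr : 0 ≤ r := dist_nonneg.trans hu
  have hhu : ‖h u‖ ≤ M * ‖u - w₀‖ := by
    simpa [h0] using (convex_closedBall w₀ r).norm_image_sub_le_of_norm_fderiv_le
      (fun x _ => hd x) hM (mem_closedBall_self hr) hu
  calc ‖fderiv ℝ R (α • h u)‖ ≤ ‖fderiv ℝ R 0‖ + L * ‖α • h u‖ := hRL.norm_le_norm_zero_add _
    _ ≤ ‖fderiv ℝ R 0‖ + L * (α * (M * ‖u - w₀‖)) := by
        rw [norm_smul, Real.norm_of_nonneg hα.le]
        gcongr
    _ = _ := by ring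

end Model

section Gradient

variable {E H : Type*} [NormedAddCommGroup E] [InnerProductSpace ℝ E] [CompleteSpace E]
  [NormedAddCommGroup H] [NormedSpace ℝ H]

theorem dist_gradient_eq {f g : E → ℝ} (u v : E) :
    dist (∇ f u) (∇ g v) = dist (fderiv ℝ f u) (fderiv ℝ g v) := by
  rw [← (toDual ℝ E).dist_map, toDual_gradient, toDual_gradient]

theorem norm_gradient_eq {f : E → ℝ} (u : E) : ‖∇ f u‖ = ‖fderiv ℝ f u‖ := by
  rw [← (toDual ℝ E).norm_map, toDual_gradient]

theorem lipschitzWith_fderiv_of_gradient {f : E → ℝ} {L : ℝ≥0} (hf : LipschitzWith L (∇ f)) :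
    LipschitzWith L (fderiv ℝ f) := by
  simpa [toDual_comp_gradient] using (toDual ℝ E).lipschitz.comp hf

variable {R : H → ℝ} {L : ℝ≥0} {α : ℝ}

theorem norm_gradient_scaledObjective_le (hα : 0 < α) (hR : Differentiable ℝ R) {φ : E → H}
    {u : E} (hφ : DifferentiableAt ℝ φ u) :
    ‖∇ (scaledObjective R α φ) u‖ ≤ α⁻¹ * ‖fderiv ℝ R (α • φ u)‖ * ‖fderiv ℝ φ u‖ := by
  rw [norm_gradient_eq, (hasFDerivAt_scaledObjective hα.ne' (hR _) hφ.hasFDerivAt).fderiv,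
    norm_smul, Real.norm_of_nonneg (inv_nonneg.2 hα.le), mul_assoc]
  gcongr
  exact ContinuousLinearMap.opNorm_comp_le _ _

theorem dist_gradient_scaledObjective_le (hα : 0 < α) (hR : Differentiable ℝ R)
    (hRL : LipschitzWith L (fderiv ℝ R)) {φ ψ : E → H} {u v : E}
    (hφ : DifferentiableAt ℝ φ u) (hψ : DifferentiableAt ℝ ψ v) :
    dist (∇ (scaledObjective R α φ) u) (∇ (scaledObjective R α ψ) v) ≤
      α⁻¹ * ‖fderiv ℝ R (α • φ u)‖ * ‖fderiv ℝ φ u - fderiv ℝ ψ v‖ +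
        L * ‖φ u - ψ v‖ * ‖fderiv ℝ ψ v‖ := by
  set A := fderiv ℝ R (α • φ u)
  set B := fderiv ℝ R (α • ψ v)
  have hAB : ‖A - B‖ ≤ L * (α * ‖φ u - ψ v‖) := by
    rw [← dist_eq_norm, ← norm_smul_of_nonneg hα.le, smul_sub, ← dist_eq_norm]
    exact hRL.dist_le_mul _ _
  have hsplit : A.comp (fderiv ℝ φ u) - B.comp (fderiv ℝ ψ v) =
      A.comp (fderiv ℝ φ u - fderiv ℝ ψ v) + (A - B).comp (fderiv ℝ ψ v) := by
    rw [ContinuousLinearMap.comp_sub, ContinuousLinearMap.sub_comp]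
    abel
  rw [dist_gradient_eq, (hasFDerivAt_scaledObjective hα.ne' (hR _) hφ.hasFDerivAt).fderiv,
    (hasFDerivAt_scaledObjective hα.ne' (hR _) hψ.hasFDerivAt).fderiv, dist_eq_norm, ← smul_sub,
    norm_smul, Real.norm_of_nonneg (inv_nonneg.2 hα.le), hsplit]
  calc α⁻¹ * ‖A.comp (fderiv ℝ φ u - fderiv ℝ ψ v) + (A - B).comp (fderiv ℝ ψ v)‖
      ≤ α⁻¹ * (‖A‖ * ‖fderiv ℝ φ u - fderiv ℝ ψ v‖ + L * (α * ‖φ u - ψ v‖) * ‖fderiv ℝ ψ v‖) := by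
        gcongr
        refine (norm_add_le _ _).trans (add_le_add (A.opNorm_comp_le _) ?_)
        exact ((A - B).opNorm_comp_le _).trans (by gcongr)
    _ = _ := by field_simp

theorem lipschitzWith_neg_gradient_scaledObjective_linearization (hα : 0 < α)
    (hR : Differentiable ℝ R) (hRL : LipschitzWith L (fderiv ℝ R)) (h : E → H) (w₀ : E) :
    LipschitzWith (L * ‖fderiv ℝ h w₀‖₊ ^ 2)
      (fun u => -∇ (scaledObjective R α (linearization h w₀)) u) := by
  refine LipschitzWith.of_dist_le_mul fun u v => ?_
  have hu := hasFDerivAt_linearization h w₀ u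
  have hv := hasFDerivAt_linearization h w₀ v
  have := dist_gradient_scaledObjective_le hα hR hRL hu.differentiableAt hv.differentiableAt
  rw [hu.fderiv, hv.fderiv, sub_self, norm_zero, mul_zero, zero_add,
    linearization_sub_linearization] at this
  rw [dist_neg_neg, dist_eq_norm u v]
  calc _ ≤ L * ‖fderiv ℝ h w₀ (u - v)‖ * ‖fderiv ℝ h w₀‖ := this
    _ ≤ L * (‖fderiv ℝ h w₀‖ * ‖u - v‖) * ‖fderiv ℝ h w₀‖ := by
        gcongr
        exact (fderiv ℝ h w₀).le_opNorm _
    _ = _ := by push_cast; ring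

end Gradient

section GradientFlow

variable {E : Type*} [NormedAddCommGroup E] [InnerProductSpace ℝ E] [CompleteSpace E]

def IsGradientFlow (F : E → ℝ) (w₀ : E) (γ : ℝ → E) : Prop :=
  γ 0 = w₀ ∧ ∀ t, 0 ≤ t → HasDerivAt γ (-∇ F (γ t)) t

theorem IsGradientFlow.continuousOn {F : E → ℝ} {w₀ : E} {γ : ℝ → E}
    (hγ : IsGradientFlow F w₀ γ) (T : ℝ) : ContinuousOn γ (Icc 0 T) :=
  fun t ht => (hγ.2 t ht.1).continuousAt.continuousWithinAt

end GradientFlow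

section LazyTraining

variable {E H : Type*} [NormedAddCommGroup E] [InnerProductSpace ℝ E] [CompleteSpace E]
  [NormedAddCommGroup H] [NormedSpace ℝ H]
  {R : H → ℝ} {L : ℝ≥0} {h : E → H} {w₀ u : E} {α r M : ℝ}

theorem norm_gradient_scaledObjective_le_of_mem_closedBall (hα : 0 < α)
    (hR : Differentiable ℝ R) (hRL : LipschitzWith L (fderiv ℝ R))
    (hd : Differentiable ℝ h) (h0 : h w₀ = 0) (hM0 : 0 ≤ M)
    (hM : ∀ x ∈ closedBall w₀ r, ‖fderiv ℝ h x‖ ≤ M) (hu : u ∈ closedBall w₀ r) :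
    ‖∇ (scaledObjective R α h) u‖ ≤ L * M ^ 2 * ‖u - w₀‖ + M * ‖fderiv ℝ R 0‖ / α := by
  calc ‖∇ (scaledObjective R α h) u‖
      ≤ α⁻¹ * ‖fderiv ℝ R (α • h u)‖ * ‖fderiv ℝ h u‖ :=
        norm_gradient_scaledObjective_le hα hR (hd u)
    _ ≤ α⁻¹ * (‖fderiv ℝ R 0‖ + L * α * M * ‖u - w₀‖) * M := by
        gcongr
        exacts [norm_fderiv_smul_le_of_mem_closedBall hα hRL hd h0 hM hu, hM u hu]
    _ = _ := by field_simp; ring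

theorem dist_gradient_scaledObjective_linearization_le {K : ℝ≥0} {ρ : ℝ} (hα : 0 < α)
    (hR : Differentiable ℝ R) (hRL : LipschitzWith L (fderiv ℝ R))
    (hd : Differentiable ℝ h) (h0 : h w₀ = 0) (hM0 : 0 ≤ M)
    (hK : LipschitzOnWith K (fderiv ℝ h) (closedBall w₀ r))
    (hM : ∀ x ∈ closedBall w₀ r, ‖fderiv ℝ h x‖ ≤ M) (hu : ‖u - w₀‖ ≤ ρ) (hρ : ρ ≤ r) :
    dist (∇ (scaledObjective R α h) u) (∇ (scaledObjective R α (linearization h w₀)) u) ≤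
      α⁻¹ * (‖fderiv ℝ R 0‖ + L * α * M * ρ) * (K * ρ) + L * (K * ρ ^ 2) * ‖fderiv ℝ h w₀‖ := by
  have hu' : u ∈ closedBall w₀ r := mem_closedBall.2 ((dist_eq_norm _ _).trans_le (hu.trans hρ))
  have hr : 0 ≤ r := dist_nonneg.trans hu'
  have hlin := hasFDerivAt_linearization h w₀ u
  have hDh : ‖fderiv ℝ h u - fderiv ℝ h w₀‖ ≤ K * ρ := by
    rw [← dist_eq_norm]
    exact (hK.dist_le_mul u hu' w₀ (mem_closedBall_self hr)).trans
      (by rw [dist_eq_norm]; gcongr)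
  have htaylor : ‖h u - linearization h w₀ u‖ ≤ K * ρ ^ 2 :=
    (norm_sub_linearization_le (fun x _ => hd x) hK hu').trans (by gcongr)
  refine (dist_gradient_scaledObjective_le hα hR hRL (hd u) hlin.differentiableAt).trans ?_
  have hRu : ‖fderiv ℝ R (α • h u)‖ ≤ ‖fderiv ℝ R 0‖ + L * α * M * ρ :=
    (norm_fderiv_smul_le_of_mem_closedBall hα hRL hd h0 hM hu').trans (by gcongr)
  rw [hlin.fderiv]
  gcongr
  exact mul_nonneg (inv_nonneg.2 hα.le) ((norm_nonneg _).trans hRu)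

theorem IsGradientFlow.norm_sub_le_of_scaledObjective {γ : ℝ → E} {T : ℝ}
    (hγ : IsGradientFlow (scaledObjective R α h) w₀ γ) (hα : 0 < α)
    (hR : Differentiable ℝ R) (hRL : LipschitzWith L (fderiv ℝ R))
    (hd : Differentiable ℝ h) (h0 : h w₀ = 0) (hM0 : 0 ≤ M)
    (hM : ∀ x ∈ closedBall w₀ r, ‖fderiv ℝ h x‖ ≤ M)
    (hsmall : M * ‖fderiv ℝ R 0‖ * gronwallBound 0 (L * M ^ 2) 1 T / α < r) :
    ∀ t ∈ Icc 0 T, ‖γ t - w₀‖ ≤ M * ‖fderiv ℝ R 0‖ * gronwallBound 0 (L * M ^ 2) 1 T / α := by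
  have hLM : 0 ≤ (L : ℝ) * M ^ 2 := by positivity
  have hε : 0 ≤ M * ‖fderiv ℝ R 0‖ / α := by positivity
  have hGε : ∀ t ≤ T, gronwallBound 0 (L * M ^ 2) (M * ‖fderiv ℝ R 0‖ / α) t ≤
      M * ‖fderiv ℝ R 0‖ * gronwallBound 0 (L * M ^ 2) 1 T / α := fun t ht =>
    (gronwallBound_zero_le hLM hε ht).trans_eq (by ring)
  intro t ht
  refine (norm_le_gronwallBound_of_norm_deriv_right_le_of_norm_lt le_rfl hLM hε
    (hγ.continuousOn T |>.sub continuousOn_const)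
    (fun s hs => ((hγ.2 s hs.1).sub_const w₀).hasDerivWithinAt) (by simp [hγ.1])
    (fun s _ hs => ?_) ((hGε _ (by linarith)).trans_lt hsmall) t ht).trans
    (hGε _ (by linarith [ht.2]))
  rw [norm_neg]
  exact norm_gradient_scaledObjective_le_of_mem_closedBall hα hR hRL hd h0 hM0 hM
    (mem_closedBall.2 ((dist_eq_norm _ _).trans_le hs.le))

theorem IsGradientFlow.dist_le_of_scaledObjective_linearization {γ γ' : ℝ → E} {K : ℝ≥0}
    {c T : ℝ} (hγ : IsGradientFlow (scaledObjective R α h) w₀ γ)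
    (hγ' : IsGradientFlow (scaledObjective R α (linearization h w₀)) w₀ γ') (hα : 0 < α)
    (hR : Differentiable ℝ R) (hRL : LipschitzWith L (fderiv ℝ R))
    (hd : Differentiable ℝ h) (h0 : h w₀ = 0) (hM0 : 0 ≤ M)
    (hK : LipschitzOnWith K (fderiv ℝ h) (closedBall w₀ r))
    (hM : ∀ x ∈ closedBall w₀ r, ‖fderiv ℝ h x‖ ≤ M) (hc : 0 ≤ c)
    (hclose : ∀ t ∈ Icc 0 T, ‖γ t - w₀‖ ≤ c / α) (hcr : c / α ≤ r) :
    ∀ t ∈ Icc 0 T, dist (γ t) (γ' t) ≤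
      ((‖fderiv ℝ R 0‖ + L * M * c) * K * c + L * K * c ^ 2 * ‖fderiv ℝ h w₀‖) *
        gronwallBound 0 (L * ‖fderiv ℝ h w₀‖ ^ 2) 1 T / α ^ 2 := by
  set ε := ((‖fderiv ℝ R 0‖ + L * M * c) * K * c + L * K * c ^ 2 * ‖fderiv ℝ h w₀‖) / α ^ 2
  have hε : 0 ≤ ε := by positivity
  have hV : ∀ t ∈ Ico 0 T, dist (-∇ (scaledObjective R α h) (γ t))
      (-∇ (scaledObjective R α (linearization h w₀)) (γ t)) ≤ ε := fun t ht => by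
    rw [dist_neg_neg]
    refine (dist_gradient_scaledObjective_linearization_le hα hR hRL hd h0 hM0 hK hM
      (hclose t (Ico_subset_Icc_self ht)) hcr).trans_eq ?_
    simp only [ε]
    field_simp
  intro t ht
  have hgron := dist_le_of_approx_trajectories_ODE (δ := 0) (εg := 0)
    (fun _ => lipschitzWith_neg_gradient_scaledObjective_linearization hα hR hRL h w₀)
    (hγ.continuousOn T) (fun s hs => (hγ.2 s hs.1).hasDerivWithinAt) hV
    (hγ'.continuousOn T) (fun s hs => (hγ'.2 s hs.1).hasDerivWithinAt)
    (fun s _ => (dist_self _).le) (by rw [hγ.1, hγ'.1, dist_self]) t ht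
  rw [add_zero, sub_zero] at hgron
  push_cast at hgron
  refine hgron.trans ((gronwallBound_zero_le (by positivity) hε ht.2).trans_eq ?_)
  ring

end LazyTraining

theorem lazy_general_param_comparison_general
    {p : ℕ} {H : Type*} [NormedAddCommGroup H] [InnerProductSpace ℝ H] [CompleteSpace H]
    (h : EuclideanSpace ℝ (Fin p) → H)
    (hdiff : Differentiable ℝ h)
    (hDhLip : LocallyLipschitz (fun u => fderiv ℝ h u))
    (R : H → ℝ) (hRdiff : Differentiable ℝ R)
    (LR : ℝ≥0) (hRgrad : LipschitzWith LR (fun y => gradient R y))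
    (w₀ : EuclideanSpace ℝ (Fin p)) (h0 : h w₀ = 0)
    (w wb : ℝ → ℝ → EuclideanSpace ℝ (Fin p))
    (hw0 : ∀ α : ℝ, 0 < α → w α 0 = w₀)
    (hwflow : ∀ α : ℝ, 0 < α → ∀ t : ℝ, 0 ≤ t →
      HasDerivAt (w α) (-(gradient (fun u => R (α • h u) / α ^ 2) (w α t))) t)
    (hwb0 : ∀ α : ℝ, 0 < α → wb α 0 = w₀)
    (hwbflow : ∀ α : ℝ, 0 < α → ∀ t : ℝ, 0 ≤ t →
      HasDerivAt (wb α)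
        (-(gradient (fun u => R (α • (h w₀ + fderiv ℝ h w₀ (u - w₀))) / α ^ 2) (wb α t))) t)
    (T : ℝ) (hT : 0 < T) :
    ∃ C > 0, ∃ α₀ > 0, ∀ α : ℝ, α₀ ≤ α → ∀ t ∈ Set.Icc (0 : ℝ) T,
      ‖w α t - wb α t‖ ≤ C / α ^ 2 := by
  obtain ⟨K, r, hr, hK⟩ := hDhLip.exists_lipschitzOnWith_closedBall w₀
  set M := ‖fderiv ℝ h w₀‖ + K * r
  have hM : ∀ x ∈ closedBall w₀ r, ‖fderiv ℝ h x‖ ≤ M := fun x hx =>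
    hK.norm_le_of_mem_closedBall hx
  have hRL := lipschitzWith_fderiv_of_gradient hRgrad
  set c := M * ‖fderiv ℝ R 0‖ * gronwallBound 0 (LR * M ^ 2) 1 T
  have hc : 0 ≤ c := by
    have := gronwallBound_nonneg le_rfl (by positivity) zero_le_one hT.le (K := LR * M ^ 2)
    positivity
  have hG := gronwallBound_nonneg le_rfl (by positivity) zero_le_one hT.le
    (K := LR * ‖fderiv ℝ h w₀‖ ^ 2)
  refine ⟨((‖fderiv ℝ R 0‖ + LR * M * c) * K * c + LR * K * c ^ 2 * ‖fderiv ℝ h w₀‖) *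
    gronwallBound 0 (LR * ‖fderiv ℝ h w₀‖ ^ 2) 1 T + 1, by positivity, (c + 1) / r,
    by positivity, fun α hα t ht => ?_⟩
  have hαpos : 0 < α := (by positivity : 0 < (c + 1) / r).trans_le hα
  have hcr : c / α < r := by
    rw [div_le_iff₀ hr] at hα
    rw [div_lt_iff₀ hαpos]
    linarith
  have hflow : IsGradientFlow (scaledObjective R α h) w₀ (w α) :=
    ⟨hw0 α hαpos, hwflow α hαpos⟩
  have hclose := hflow.norm_sub_le_of_scaledObjective hαpos hRdiff hRL hdiff h0 (by positivity)
    hM hcr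
  rw [← dist_eq_norm]
  refine (hflow.dist_le_of_scaledObjective_linearization ⟨hwb0 α hαpos, hwbflow α hαpos⟩ hαpos
    hRdiff hRL hdiff h0 (by positivity) hK hM hc hclose hcr.le t ht).trans ?_
  gcongr
  linarith

/-- **Theorem 2.1 (General lazy training), parameter comparison with the linearized flow.**
If `h w₀ = 0`, then for a fixed time horizon `T > 0` there are constants `C > 0` and
`α₀ > 0` (independent of `α`) such that for all `α ≥ α₀`,
`sup_{t ∈ [0,T]} ‖w_α(t) − w̄_α(t)‖ ≤ C / α²`. -/
theorem lazy_general_param_comparison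
    {p : ℕ} {H : Type*} [NormedAddCommGroup H] [InnerProductSpace ℝ H] [CompleteSpace H]
    (h : EuclideanSpace ℝ (Fin p) → H)
    (hdiff : Differentiable ℝ h)
    (hDhLip : LocallyLipschitz (fun u => fderiv ℝ h u))
    (R : H → ℝ) (hRnonneg : ∀ y, 0 ≤ R y) (hRdiff : Differentiable ℝ R)
    (LR : ℝ≥0) (hRgrad : LipschitzWith LR (fun y => gradient R y))
    (w₀ : EuclideanSpace ℝ (Fin p)) (h0 : h w₀ = 0)
    (w wb : ℝ → ℝ → EuclideanSpace ℝ (Fin p))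
    (hw0 : ∀ α : ℝ, 0 < α → w α 0 = w₀)
    (hwflow : ∀ α : ℝ, 0 < α → ∀ t : ℝ, 0 ≤ t →
      HasDerivAt (w α) (-(gradient (fun u => R (α • h u) / α ^ 2) (w α t))) t)
    (hwb0 : ∀ α : ℝ, 0 < α → wb α 0 = w₀)
    (hwbflow : ∀ α : ℝ, 0 < α → ∀ t : ℝ, 0 ≤ t →
      HasDerivAt (wb α)
        (-(gradient (fun u => R (α • (h w₀ + fderiv ℝ h w₀ (u - w₀))) / α ^ 2) (wb α t))) t)
    (T : ℝ) (hT : 0 < T) :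
    ∃ C > 0, ∃ α₀ > 0, ∀ α : ℝ, α₀ ≤ α → ∀ t ∈ Set.Icc (0 : ℝ) T,
      ‖w α t - wb α t‖ ≤ C / α ^ 2 :=
  lazy_general_param_comparison_general h hdiff hDhLip R hRdiff LR hRgrad w₀ h0 w wb hw0 hwflow hwb0
    hwbflow T hT
end

section
/- Fix K > 0 and set T := K/Lip(h)². If α ≥ K‖α h(w₀) − y⋆‖/(r · Lip(h)), then ‖α h(w_α(T)) − α h̄(w̄_α(T))‖ / ‖α h(w₀) − y⋆‖ ≤ (K²/α) · (Lip(Dh)/Lip(h)²) · ‖α h(w₀) − y⋆‖. -/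
/-!
Along the gradient flow of `F_α` the residual `y = α h(w) - ystar` obeys `y' = -A (A† y)` with
`A = Dh(w)`, so `‖y‖` never increases and `w` moves with speed at most `Lh ‖y(0)‖ / α`. The
condition on `α` keeps `w` in the ball up to time `T`, where therefore
`‖Dh(w t) - Dh(w₀)‖ ≤ LDh Lh ‖y(0)‖ t / α`. The linearized residual obeys the same equation with
`B = Dh(w₀)` in place of `A`. As `B B†` is positive, only `A A† - B B†`, of norm at most
`2 Lh ‖A - B‖`, can make the two residuals drift apart; integrating this linear-in-`t` rate up
to `T` gives the bound.
-/

open scoped RealInnerProductSpace NNReal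

open ContinuousLinearMap Metric Set

section Adjoint

variable {E H : Type*} [NormedAddCommGroup E] [InnerProductSpace ℝ E] [CompleteSpace E]
  [NormedAddCommGroup H] [InnerProductSpace ℝ H] [CompleteSpace H]

lemma norm_comp_adjoint_sub_comp_adjoint_le (A B : E →L[ℝ] H) :
    ‖A ∘L adjoint A - B ∘L adjoint B‖ ≤ (‖A‖ + ‖B‖) * ‖A - B‖ := by
  have hsplit : A ∘L adjoint A - B ∘L adjoint B = A ∘L adjoint (A - B) + (A - B) ∘L adjoint B := by
    simp only [map_sub, comp_sub, sub_comp]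
    abel
  calc ‖A ∘L adjoint A - B ∘L adjoint B‖ ≤ ‖A‖ * ‖A - B‖ + ‖A - B‖ * ‖B‖ := by
        rw [hsplit]
        refine (norm_add_le _ _).trans (add_le_add ?_ ?_)
        · simpa only [LinearIsometryEquiv.norm_map] using opNorm_comp_le A (adjoint (A - B))
        · simpa only [LinearIsometryEquiv.norm_map] using opNorm_comp_le (A - B) (adjoint B)
    _ = (‖A‖ + ‖B‖) * ‖A - B‖ := by ring

lemma inner_sub_comp_adjoint_sub_le (A B : E →L[ℝ] H) (g gb : H) :
    ⟪g - gb, B (adjoint B gb) - A (adjoint A g)⟫ ≤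
      ‖g - gb‖ * ((‖A‖ + ‖B‖) * ‖A - B‖ * ‖g‖) := by
  have hsplit : B (adjoint B gb) - A (adjoint A g) =
      -(B ∘L adjoint B) (g - gb) - (A ∘L adjoint A - B ∘L adjoint B) g := by
    simp only [comp_apply, sub_apply, map_sub]
    abel
  have hpos : 0 ≤ ⟪g - gb, (B ∘L adjoint B) (g - gb)⟫ := by
    rw [comp_apply, ← adjoint_inner_left]
    exact real_inner_self_nonneg
  have hsmall : -⟪g - gb, (A ∘L adjoint A - B ∘L adjoint B) g⟫ ≤
      ‖g - gb‖ * ((‖A‖ + ‖B‖) * ‖A - B‖ * ‖g‖) :=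
    calc _ ≤ ‖g - gb‖ * ‖(A ∘L adjoint A - B ∘L adjoint B) g‖ :=
          (neg_le_abs _).trans (abs_real_inner_le_norm _ _)
      _ ≤ _ := by
          gcongr
          exact (le_opNorm _ _).trans (by gcongr; exact norm_comp_adjoint_sub_comp_adjoint_le A B)
  rw [hsplit, inner_sub_right, inner_neg_right]
  linarith

end Adjoint

lemma norm_le_add_of_inner_deriv_le {H : Type*} [NormedAddCommGroup H] [InnerProductSpace ℝ H]
    {f f' : ℝ → H} {G g : ℝ → ℝ} {a b : ℝ} (hab : a ≤ b)
    (hf : ∀ t ∈ Icc a b, HasDerivAt f (f' t) t) (hG : ∀ t ∈ Icc a b, HasDerivAt G (g t) t)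
    (hg : ∀ t ∈ Ioo a b, 0 ≤ g t) (hfg : ∀ t ∈ Ioo a b, ⟪f t, f' t⟫ ≤ ‖f t‖ * g t) :
    ‖f b‖ ≤ ‖f a‖ + (G b - G a) := by
  refine le_of_forall_pos_le_add fun ε hε => ?_
  -- `‖f‖` need not be differentiable where `f` vanishes; `√(‖f‖² + ε²)` is.
  set φ : ℝ → ℝ := fun t => √(‖f t‖ ^ 2 + ε ^ 2)
  have hφ_pos : ∀ t, 0 < φ t := fun t => Real.sqrt_pos.2 (by positivity)
  have hφ : ∀ t ∈ Icc a b, HasDerivAt (fun s => φ s - G s) (2 * ⟪f t, f' t⟫ / (2 * φ t) - g t) t :=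
    fun t ht => (((hf t ht).norm_sq.add_const _).sqrt (by positivity)).sub (hG t ht)
  have hle_φ : ∀ t, ‖f t‖ ≤ φ t := fun t => Real.le_sqrt_of_sq_le (by nlinarith)
  have hanti : AntitoneOn (fun s => φ s - G s) (Icc a b) := by
    refine antitoneOn_of_deriv_nonpos (convex_Icc a b)
      (fun t ht => (hφ t ht).continuousAt.continuousWithinAt) (fun t ht => ?_) (fun t ht => ?_)
    <;> rw [interior_Icc] at ht
    · exact (hφ t (Ioo_subset_Icc_self ht)).differentiableAt.differentiableWithinAt
    rw [(hφ t (Ioo_subset_Icc_self ht)).deriv, mul_div_mul_left _ _ two_ne_zero, sub_nonpos,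
      div_le_iff₀ (hφ_pos t)]
    calc ⟪f t, f' t⟫ ≤ ‖f t‖ * g t := hfg t ht
      _ ≤ φ t * g t := mul_le_mul_of_nonneg_right (hle_φ t) (hg t ht)
      _ = g t * φ t := mul_comm _ _
  have hφa : φ a ≤ ‖f a‖ + ε :=
    Real.sqrt_le_iff.2 ⟨by positivity, by nlinarith [norm_nonneg (f a)]⟩
  have := hanti (left_mem_Icc.2 hab) (right_mem_Icc.2 hab) hab
  linarith [hle_φ b]

lemma norm_sub_le_mul_of_norm_deriv_le_on_closedBall {E : Type*} [NormedAddCommGroup E]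
    [NormedSpace ℝ E] {w v : ℝ → E} {x₀ : E} {r C T : ℝ} (hr : 0 < r) (hC : 0 ≤ C)
    (hCT : C * T ≤ r)
    (hw₀ : w 0 = x₀) (hw : ∀ t ∈ Icc 0 T, HasDerivAt w (v t) t)
    (hv : ∀ t ∈ Icc 0 T, w t ∈ closedBall x₀ r → ‖v t‖ ≤ C) :
    ∀ t ∈ Icc 0 T, ‖w t - x₀‖ ≤ C * t := by
  have hcont : ContinuousOn w (Icc 0 T) := fun t ht => (hw t ht).continuousAt.continuousWithinAt
  refine IsClosed.Icc_subset_of_forall_exists_gt (s := {t | ‖w t - x₀‖ ≤ C * t}) ?_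
    (by simp [hw₀]) ?_
  · rw [inter_comm]
    exact isClosed_Icc.isClosed_le (hcont.sub continuousOn_const).norm
      (continuousOn_const.mul continuousOn_id)
  rintro x ⟨hxC : ‖w x - x₀‖ ≤ C * x, hx₀, hxT⟩ y hy
  have hCx : C * x < r := by
    rcases hC.eq_or_lt with hC0 | hCpos
    · rwa [← hC0, zero_mul]
    · nlinarith
  have hx_ball : w x ∈ ball x₀ r := by
    rw [mem_ball, dist_eq_norm]
    exact hxC.trans_lt hCx
  obtain ⟨u, hxu, hu⟩ := mem_nhdsGE_iff_exists_Icc_subset.1 <| nhdsWithin_le_nhds <|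
    (hw x ⟨hx₀, hxT.le⟩).continuousAt.preimage_mem_nhds (isOpen_ball.mem_nhds hx_ball)
  set t := min u (min y T)
  have hxt : x < t := lt_min hxu (lt_min hy hxT)
  have hsub : Icc x t ⊆ Icc 0 T := Icc_subset_Icc hx₀ ((min_le_right _ _).trans (min_le_right _ _))
  have hstep := norm_image_sub_le_of_norm_deriv_le_segment'
    (fun s hs => (hw s (hsub hs)).hasDerivWithinAt)
    (fun s hs => hv s (hsub (Ico_subset_Icc_self hs))
      (ball_subset_closedBall (hu ⟨hs.1, hs.2.le.trans (min_le_left _ _)⟩)))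
    t (right_mem_Icc.2 hxt.le)
  refine ⟨t, ?_, hxt, (min_le_right _ _).trans (min_le_left _ _)⟩
  calc ‖w t - x₀‖ ≤ ‖w t - w x‖ + ‖w x - x₀‖ := norm_sub_le_norm_sub_add_norm_sub _ _ _
    _ ≤ C * (t - x) + C * x := add_le_add hstep hxC
    _ = C * t := by ring

lemma norm_fderiv_le_of_lipschitzOnWith_closedBall {E F : Type*} [NormedAddCommGroup E]
    [NormedSpace ℝ E] [NormedAddCommGroup F] [NormedSpace ℝ F] {f : E → F} {x₀ : E} {r : ℝ}
    {L : ℝ≥0} (hr : r ≠ 0) (hf : LipschitzOnWith L f (closedBall x₀ r))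
    (hf' : ContinuousOn (fderiv ℝ f) (closedBall x₀ r)) {x : E} (hx : x ∈ closedBall x₀ r) :
    ‖fderiv ℝ f x‖ ≤ L := by
  have hball : ball x₀ r ⊆ (fun y => ‖fderiv ℝ f y‖) ⁻¹' Iic (L : ℝ) := fun y hy =>
    norm_fderiv_le_of_lipschitzOn ℝ (isOpen_ball.mem_nhds hy) (hf.mono ball_subset_closedBall)
  rw [← closure_ball x₀ hr] at hx hf'
  exact closure_minimal (image_subset_iff.2 hball) isClosed_Iic
    (hf'.norm.image_closure (mem_image_of_mem _ hx))

section SquareLoss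

variable {E H : Type*} [NormedAddCommGroup E] [InnerProductSpace ℝ E] [CompleteSpace E]
  [NormedAddCommGroup H] [InnerProductSpace ℝ H] [CompleteSpace H]

/-- The objective `F_α = R(α f(·)) / α²` of the square loss `R(y) = ½‖y - ystar‖²`. -/
noncomputable def scaledSquareLoss (f : E → H) (ystar : H) (α : ℝ) (u : E) : ℝ :=
  ‖α • f u - ystar‖ ^ 2 / 2 / α ^ 2

lemma hasGradientAt_scaledSquareLoss {f : E → H} {Df : E →L[ℝ] H} {u : E}
    (hf : HasFDerivAt f Df u) (ystar : H) {α : ℝ} (hα : α ≠ 0) :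
    HasGradientAt (scaledSquareLoss f ystar α) (α⁻¹ • adjoint Df (α • f u - ystar)) u := by
  have hF : HasFDerivAt (scaledSquareLoss f ystar α)
      ((2 * α ^ 2)⁻¹ • (2 • (innerSL ℝ (α • f u - ystar)).comp (α • Df))) u := by
    have hloss : scaledSquareLoss f ystar α = fun v => (2 * α ^ 2)⁻¹ • ‖α • f v - ystar‖ ^ 2 := by
      funext v
      rw [scaledSquareLoss, smul_eq_mul, div_div]
      ring
    rw [hloss]
    exact (((hf.const_smul α).sub_const ystar).norm_sq).const_smul (2 * α ^ 2)⁻¹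
  rw [hasGradientAt_iff_hasFDerivAt]
  refine hF.congr_fderiv (ContinuousLinearMap.ext fun v => ?_)
  simp only [InnerProductSpace.toDual_apply_apply, smul_apply, comp_apply, innerSL_apply_apply,
    inner_smul_left, smul_eq_mul, adjoint_inner_left, conj_trivial, inner_smul_right]
  field_simp
  ring

lemma norm_gradient_scaledSquareLoss_le {f : E → H} {Df : E →L[ℝ] H} {u : E}
    (hf : HasFDerivAt f Df u) (ystar : H) {α : ℝ} (hα : 0 < α) :
    ‖gradient (scaledSquareLoss f ystar α) u‖ ≤ ‖Df‖ * ‖α • f u - ystar‖ / α := by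
  rw [(hasGradientAt_scaledSquareLoss hf ystar hα.ne').gradient, norm_smul, norm_inv,
    Real.norm_of_nonneg hα.le, inv_mul_eq_div]
  gcongr
  exact (le_opNorm _ _).trans_eq (by rw [LinearIsometryEquiv.norm_map])

lemma hasDerivAt_residual_of_gradientFlow {f : E → H} {Df : E → E →L[ℝ] H}
    (hf : ∀ u, HasFDerivAt f (Df u) u) (ystar : H) {α : ℝ} (hα : α ≠ 0) {w : ℝ → E} {t : ℝ}
    (hw : HasDerivAt w (-gradient (scaledSquareLoss f ystar α) (w t)) t) :
    HasDerivAt (fun s => α • f (w s) - ystar)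
      (-Df (w t) (adjoint (Df (w t)) (α • f (w t) - ystar))) t := by
  rw [(hasGradientAt_scaledSquareLoss (hf (w t)) ystar hα).gradient] at hw
  have h := (((hf (w t)).const_smul α).comp_hasDerivAt t hw).sub_const ystar
  rwa [smul_apply, map_neg, map_smul, smul_neg, smul_smul, mul_inv_cancel₀ hα, one_smul] at h

lemma norm_residual_le_of_gradientFlow {f : E → H} {Df : E → E →L[ℝ] H}
    (hf : ∀ u, HasFDerivAt f (Df u) u) (ystar : H) {α : ℝ} (hα : α ≠ 0) {w : ℝ → E}
    (hw : ∀ t, 0 ≤ t → HasDerivAt w (-gradient (scaledSquareLoss f ystar α) (w t)) t)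
    {T : ℝ} (hT : 0 ≤ T) :
    ‖α • f (w T) - ystar‖ ≤ ‖α • f (w 0) - ystar‖ := by
  have h := norm_le_add_of_inner_deriv_le (G := fun _ => 0) (g := fun _ => 0) hT
    (fun t ht => hasDerivAt_residual_of_gradientFlow hf ystar hα (hw t ht.1))
    (fun _ _ => hasDerivAt_const _ _) (fun _ _ => le_rfl) (fun t _ => ?_)
  · simpa using h
  rw [inner_neg_right, ← adjoint_inner_left, real_inner_self_eq_norm_sq, mul_zero, neg_nonpos]
  positivity

lemma norm_sub_le_of_residual_dynamics {y yb : ℝ → H} {A : ℝ → E →L[ℝ] H} {B : E →L[ℝ] H}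
    {L M N T : ℝ} (hT : 0 ≤ T) (h₀ : y 0 = yb 0)
    (hy : ∀ t ∈ Icc 0 T, HasDerivAt y (-A t (adjoint (A t) (y t))) t)
    (hyb : ∀ t ∈ Icc 0 T, HasDerivAt yb (-B (adjoint B (yb t))) t)
    (hA : ∀ t ∈ Icc 0 T, ‖A t‖ ≤ L) (hB : ‖B‖ ≤ L) (hAB : ∀ t ∈ Icc 0 T, ‖A t - B‖ ≤ M * t)
    (hyN : ∀ t ∈ Icc 0 T, ‖y t‖ ≤ N) :
    ‖y T - yb T‖ ≤ L * M * N * T ^ 2 := by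
  have hG : ∀ t ∈ Icc 0 T, HasDerivAt (fun s => L * M * N * s ^ 2) (2 * L * (M * t) * N) t :=
    fun t _ => ((hasDerivAt_pow 2 t).const_mul (L * M * N)).congr_deriv (by norm_num; ring)
  have h := norm_le_add_of_inner_deriv_le hT (fun t ht => (hy t ht).sub (hyb t ht)) hG
    (fun t ht => ?_) (fun t ht => ?_)
  · simpa [h₀] using h
  all_goals
    have ht' := Ioo_subset_Icc_self ht
    have hL : 0 ≤ L := (norm_nonneg _).trans hB
    have hMt : 0 ≤ M * t := (norm_nonneg _).trans (hAB t ht')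
    have hN : 0 ≤ N := (norm_nonneg _).trans (hyN t ht')
  · positivity
  calc ⟪y t - yb t, -A t (adjoint (A t) (y t)) - -B (adjoint B (yb t))⟫
      ≤ ‖y t - yb t‖ * ((‖A t‖ + ‖B‖) * ‖A t - B‖ * ‖y t‖) := by
        rw [sub_neg_eq_add, neg_add_eq_sub]
        exact inner_sub_comp_adjoint_sub_le _ _ _ _
    _ ≤ ‖y t - yb t‖ * ((L + L) * (M * t) * N) := by
        gcongr
        · exact hA t ht'
        · exact hAB t ht'
        · exact hyN t ht'
    _ = ‖y t - yb t‖ * (2 * L * (M * t) * N) := by ring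

theorem norm_sub_linearized_le_of_gradientFlow {f : E → H} {Df : E → E →L[ℝ] H}
    (hf : ∀ u, HasFDerivAt f (Df u) u) {x₀ : E} {r L M : ℝ} (hr : 0 < r) (hM : 0 ≤ M)
    (hDf : ∀ u ∈ closedBall x₀ r, ‖Df u‖ ≤ L)
    (hDf_sub : ∀ u ∈ closedBall x₀ r, ‖Df u - Df x₀‖ ≤ M * ‖u - x₀‖)
    (ystar : H) {α : ℝ} (hα : 0 < α) {w wb : ℝ → E} (hw₀ : w 0 = x₀) (hwb₀ : wb 0 = x₀)
    (hw : ∀ t, 0 ≤ t → HasDerivAt w (-gradient (scaledSquareLoss f ystar α) (w t)) t)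
    (hwb : ∀ t, 0 ≤ t → HasDerivAt wb
      (-gradient (scaledSquareLoss (fun u => f x₀ + Df x₀ (u - x₀)) ystar α) (wb t)) t)
    {T : ℝ} (hT : 0 ≤ T) (hT_small : L * ‖α • f x₀ - ystar‖ / α * T ≤ r) :
    ‖α • f (w T) - α • (f x₀ + Df x₀ (wb T - x₀))‖ ≤
      L ^ 2 * M * ‖α • f x₀ - ystar‖ ^ 2 / α * T ^ 2 := by
  set N := ‖α • f x₀ - ystar‖
  set C := L * N / α
  have hx₀ : x₀ ∈ closedBall x₀ r := mem_closedBall_self hr.le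
  have hL : 0 ≤ L := (norm_nonneg _).trans (hDf x₀ hx₀)
  have hC : 0 ≤ C := by positivity
  have hloss : ∀ t, 0 ≤ t → ‖α • f (w t) - ystar‖ ≤ N := fun t ht => by
    simpa [hw₀] using norm_residual_le_of_gradientFlow hf ystar hα.ne' hw ht
  have hconfined : ∀ t ∈ Icc 0 T, ‖w t - x₀‖ ≤ C * t :=
    norm_sub_le_mul_of_norm_deriv_le_on_closedBall hr hC hT_small hw₀ (fun t ht => hw t ht.1)
      fun t ht hwt => by
        rw [norm_neg]
        exact (norm_gradient_scaledSquareLoss_le (hf _) ystar hα).trans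
          (by dsimp only [C]; gcongr; exacts [hDf _ hwt, hloss t ht.1])
  have hball : ∀ t ∈ Icc 0 T, w t ∈ closedBall x₀ r := fun t ht => by
    rw [mem_closedBall, dist_eq_norm]
    exact (hconfined t ht).trans ((mul_le_mul_of_nonneg_left ht.2 hC).trans hT_small)
  have hDf_lin : ∀ u, HasFDerivAt (fun v => f x₀ + Df x₀ (v - x₀)) (Df x₀) u := fun u =>
    ((Df x₀).hasFDerivAt.comp u ((hasFDerivAt_id u).sub_const x₀)).const_add _
  have hgap := norm_sub_le_of_residual_dynamics (M := M * C) hT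
    (by rw [hw₀, hwb₀, sub_self, map_zero, add_zero])
    (fun t ht => hasDerivAt_residual_of_gradientFlow hf ystar hα.ne' (hw t ht.1))
    (fun t ht => hasDerivAt_residual_of_gradientFlow hDf_lin ystar hα.ne' (hwb t ht.1))
    (fun t ht => hDf _ (hball t ht)) (hDf _ hx₀)
    (fun t ht => (hDf_sub _ (hball t ht)).trans <| by
      rw [mul_assoc]; exact mul_le_mul_of_nonneg_left (hconfined t ht) hM)
    (fun t ht => hloss t ht.1)
  rw [sub_sub_sub_cancel_right] at hgap
  exact hgap.trans_eq (by ring)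

end SquareLoss

/-- **Theorem 2.2 (Square loss, quantitative).**
With the square loss `R(y) = ½‖y − ystar‖²`, if `h` is `Lh`-Lipschitz and `Dh` is
`LDh`-Lipschitz on the closed ball of radius `r` around `w₀`, then for `K > 0`,
`T := K / Lh²` and `α ≥ K‖α h(w₀) − ystar‖/(r Lh)` one has
`‖α h(w_α(T)) − α h̄(w̄_α(T))‖ / ‖α h(w₀) − ystar‖ ≤ (K²/α)(LDh/Lh²)‖α h(w₀) − ystar‖`. -/
theorem lazy_square_loss_output_bound
    {p : ℕ} {H : Type*} [NormedAddCommGroup H] [InnerProductSpace ℝ H] [CompleteSpace H]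
    (h : EuclideanSpace ℝ (Fin p) → H) (hdiff : Differentiable ℝ h)
    (ystar : H) (w₀ : EuclideanSpace ℝ (Fin p))
    (r Lh LDh : ℝ) (hr : 0 < r) (hLh : 0 < Lh) (hLDh : 0 ≤ LDh)
    (hhLip : ∀ u ∈ Metric.closedBall w₀ r, ∀ v ∈ Metric.closedBall w₀ r,
      ‖h u - h v‖ ≤ Lh * ‖u - v‖)
    (hDhLip : ∀ u ∈ Metric.closedBall w₀ r, ∀ v ∈ Metric.closedBall w₀ r,
      ‖fderiv ℝ h u - fderiv ℝ h v‖ ≤ LDh * ‖u - v‖)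
    (α : ℝ) (hα : 0 < α)
    (w wb : ℝ → EuclideanSpace ℝ (Fin p))
    (hw0 : w 0 = w₀) (hwb0 : wb 0 = w₀)
    (hwflow : ∀ t : ℝ, 0 ≤ t → HasDerivAt w
      (-(gradient (fun u => ‖α • h u - ystar‖ ^ 2 / 2 / α ^ 2) (w t))) t)
    (hwbflow : ∀ t : ℝ, 0 ≤ t → HasDerivAt wb
      (-(gradient
          (fun u => ‖α • (h w₀ + fderiv ℝ h w₀ (u - w₀)) - ystar‖ ^ 2 / 2 / α ^ 2) (wb t))) t)
    (K : ℝ) (hK : 0 < K)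
    (hαbig : K * ‖α • h w₀ - ystar‖ / (r * Lh) ≤ α) :
    ‖α • h (w (K / Lh ^ 2)) - α • (h w₀ + fderiv ℝ h w₀ (wb (K / Lh ^ 2) - w₀))‖ /
        ‖α • h w₀ - ystar‖ ≤
      K ^ 2 / α * (LDh / Lh ^ 2) * ‖α • h w₀ - ystar‖ := by
  set N := ‖α • h w₀ - ystar‖
  obtain hN | hN := (norm_nonneg _ : 0 ≤ N).eq_or_lt
  · rw [show N = 0 from hN.symm, div_zero, mul_zero]
  have hLip : LipschitzOnWith Lh.toNNReal h (closedBall w₀ r) :=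
    .of_dist_le' fun u hu v hv => by simpa only [dist_eq_norm] using hhLip u hu v hv
  have hDLip : LipschitzOnWith LDh.toNNReal (fderiv ℝ h) (closedBall w₀ r) :=
    .of_dist_le' fun u hu v hv => by simpa only [dist_eq_norm] using hDhLip u hu v hv
  have hDh_le : ∀ u ∈ closedBall w₀ r, ‖fderiv ℝ h u‖ ≤ Lh := fun u hu => by
    simpa [Real.coe_toNNReal _ hLh.le] using
      norm_fderiv_le_of_lipschitzOnWith_closedBall hr.ne' hLip hDLip.continuousOn hu
  have hT_small : Lh * N / α * (K / Lh ^ 2) ≤ r := by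
    rw [div_le_iff₀ (by positivity)] at hαbig
    calc Lh * N / α * (K / Lh ^ 2) = K * N / (α * Lh) := by field_simp
      _ ≤ r := by rw [div_le_iff₀ (by positivity)]; linarith
  have hgap := norm_sub_linearized_le_of_gradientFlow (fun u => (hdiff u).hasFDerivAt) hr hLDh
    hDh_le (fun u hu => hDhLip u hu w₀ (mem_closedBall_self hr.le)) ystar hα hw0 hwb0
    hwflow hwbflow (by positivity) hT_small
  calc _ ≤ Lh ^ 2 * LDh * N ^ 2 / α * (K / Lh ^ 2) ^ 2 / N := by gcongr
    _ = _ := by field_simp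
end

section
/- Fix K > 0 and define the exit time T_exit := inf{t > 0 : ‖w_α(t) − w₀‖ > r}. Then for every t ≤ T_exit it holds ‖w_α(t) − w₀‖ ≤ (t/α) · ‖α h(w₀) − y⋆‖ · Lip(h). Consequently, if α ≥ K‖α h(w₀) − y⋆‖/(r · Lip(h)), then T_exit > K/Lip(h)², i.e. the gradient flow remains in the ball of radius r around w₀ up to time K/Lip(h)². -/
/-!
Rescaling turns `F_α` into `½‖h w - y⋆/α‖²`, whose gradient is bounded by `‖Dh w‖ ‖h w - y⋆/α‖`.
The residual does not increase along the flow, and `‖Dh‖ ≤ Lip(h)` on the ball (on its boundary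
sphere by continuity of `Dh`), so while the flow stays in the ball its speed is at most
`Lip(h) ‖α h w₀ - y⋆‖ / α`; the mean value inequality gives the displacement bound. At a finite
exit time `τ` the flow is at distance at least `r` from `w₀`, while for `τ ≤ K / Lip(h)²` the
displacement bound gives at most `r`. Equality is excluded: attaining the speed bound throughout
keeps the residual constant, which makes the gradient, hence the flow, stationary.
-/

open Set Metric Filter Topology
open scoped ENNReal

theorem norm_fderiv_le_of_lipschitz_closedBall {E F : Type*} [NormedAddCommGroup E]
    [NormedSpace ℝ E] [NormedAddCommGroup F] [NormedSpace ℝ F] {h : E → F} {w₀ : E} {r L : ℝ}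
    (hr : 0 < r) (hL : 0 ≤ L)
    (hLip : ∀ u ∈ closedBall w₀ r, ∀ v ∈ closedBall w₀ r, ‖h u - h v‖ ≤ L * ‖u - v‖)
    (hDh : ContinuousOn (fderiv ℝ h) (closedBall w₀ r)) {u : E} (hu : u ∈ closedBall w₀ r) :
    ‖fderiv ℝ h u‖ ≤ L := by
  have hball : ∀ v ∈ ball w₀ r, ‖fderiv ℝ h v‖ ≤ L := fun v hv =>
    norm_fderiv_le_of_lip' ℝ hL (eventually_of_mem (isOpen_ball.mem_nhds hv) fun x hx =>
      hLip x (ball_subset_closedBall hx) v (ball_subset_closedBall hv))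
  exact ContinuousWithinAt.closure_le (by rwa [closure_ball w₀ hr.ne'])
    ((hDh u hu).mono ball_subset_closedBall).norm continuousWithinAt_const hball

theorem norm_smul_sub_eq_abs_mul {F : Type*} [NormedAddCommGroup F] [NormedSpace ℝ F] {α : ℝ}
    (hα : α ≠ 0) (v y : F) : ‖α • v - y‖ = |α| * ‖v - α⁻¹ • y‖ := by
  rw [← Real.norm_eq_abs, ← norm_smul, smul_sub, smul_inv_smul₀ hα]

section GradientFlow

variable {E : Type*} [NormedAddCommGroup E] [InnerProductSpace ℝ E] [CompleteSpace E]
  {f : E → ℝ} {w : ℝ → E}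

theorem norm_gradient_eq_norm_fderiv (f : E → ℝ) (x : E) :
    ‖gradient f x‖ = ‖fderiv ℝ f x‖ :=
  (InnerProductSpace.toDual ℝ E).symm.norm_map _

theorem HasGradientAt.hasDerivAt_comp_of_hasDerivAt_neg {g : E} {t : ℝ}
    (hf : HasGradientAt f g (w t)) (hw : HasDerivAt w (-g) t) :
    HasDerivAt (f ∘ w) (-‖g‖ ^ 2) t := by
  refine (hf.hasFDerivAt.comp_hasDerivAt t hw).congr_deriv ?_
  rw [InnerProductSpace.toDual_apply_apply, inner_neg_right, real_inner_self_eq_norm_sq]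

theorem antitoneOn_comp_of_gradientFlow {s : Set ℝ} (hf : Differentiable ℝ f) (hs : Convex ℝ s)
    (hw : ∀ t ∈ s, HasDerivAt w (-gradient f (w t)) t) : AntitoneOn (f ∘ w) s := by
  have hderiv : ∀ t ∈ s, HasDerivAt (f ∘ w) (-‖gradient f (w t)‖ ^ 2) t := fun t ht =>
    (hf _).hasGradientAt.hasDerivAt_comp_of_hasDerivAt_neg (hw t ht)
  refine antitoneOn_of_hasDerivWithinAt_nonpos hs
    (fun t ht => (hderiv t ht).continuousAt.continuousWithinAt)
    (fun t ht => (hderiv t (interior_subset ht)).hasDerivWithinAt) fun t _ => ?_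
  exact neg_nonpos.2 (sq_nonneg _)

theorem gradientFlow_eq_of_comp_eq {a b : ℝ} (hf : Differentiable ℝ f) (hab : a ≤ b)
    (hw : ∀ t ∈ Icc a b, HasDerivAt w (-gradient f (w t)) t) (hfab : f (w b) = f (w a)) :
    w b = w a := by
  have hanti := antitoneOn_comp_of_gradientFlow hf (convex_Icc a b) hw
  have hconst : ∀ t ∈ Icc a b, f (w t) = f (w a) := fun t ht =>
    le_antisymm (hanti ⟨le_rfl, hab⟩ ht ht.1) (hfab ▸ hanti ht ⟨hab, le_rfl⟩ ht.2)
  have hgrad : ∀ t ∈ Ico a b, gradient f (w t) = 0 := by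
    intro t ht
    have hflow := (hf _).hasGradientAt.hasDerivAt_comp_of_hasDerivAt_neg
      (hw t (Ico_subset_Icc_self ht))
    have hzero : HasDerivWithinAt (f ∘ w) 0 (Ici t) t :=
      (hasDerivWithinAt_const t _ (f (w a))).congr_of_eventuallyEq
        (eventually_of_mem (Icc_mem_nhdsGE ht.2) fun s hs =>
          hconst s ⟨ht.1.trans hs.1, hs.2⟩)
        (hconst t (Ico_subset_Icc_self ht))
    have hnorm := (uniqueDiffWithinAt_Ici t).eq_deriv _ hflow.hasDerivWithinAt hzero
    simpa using hnorm
  refine constant_of_has_deriv_right_zero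
    (fun t ht => (hw t ht).continuousAt.continuousWithinAt) (fun t ht => ?_) b ⟨hab, le_rfl⟩
  simpa [hgrad t ht] using (hw t (Ico_subset_Icc_self ht)).hasDerivWithinAt

end GradientFlow

section SquareLoss

variable {E F : Type*} [NormedAddCommGroup E] [InnerProductSpace ℝ E]
  [NormedAddCommGroup F] [InnerProductSpace ℝ F] {h : E → F} {z : F} {w : ℝ → E}

theorem HasFDerivAt.half_norm_sub_sq {h' : E →L[ℝ] F} {u : E} (hh : HasFDerivAt h h' u) :
    HasFDerivAt (fun u => ‖h u - z‖ ^ 2 / 2) ((innerSL ℝ (h u - z)).comp h') u := by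
  have hhalf : (fun u => ‖h u - z‖ ^ 2 / 2) = fun u => (2⁻¹ : ℝ) • ‖h u - z‖ ^ 2 := by
    funext u
    rw [smul_eq_mul, div_eq_inv_mul]
  rw [hhalf]
  refine (((hh.sub_const z).norm_sq).const_smul (2⁻¹ : ℝ)).congr_fderiv ?_
  rw [← Nat.cast_smul_eq_nsmul ℝ, smul_smul]
  norm_num

theorem Differentiable.half_norm_sub_sq (hh : Differentiable ℝ h) :
    Differentiable ℝ fun u => ‖h u - z‖ ^ 2 / 2 :=
  fun u => (hh u).hasFDerivAt.half_norm_sub_sq.differentiableAt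

variable [CompleteSpace E]

theorem norm_gradient_half_norm_sub_sq_le {u : E} (hh : DifferentiableAt ℝ h u) :
    ‖gradient (fun u => ‖h u - z‖ ^ 2 / 2) u‖ ≤ ‖fderiv ℝ h u‖ * ‖h u - z‖ := by
  rw [norm_gradient_eq_norm_fderiv, hh.hasFDerivAt.half_norm_sub_sq.fderiv, mul_comm]
  calc _ ≤ ‖innerSL ℝ (h u - z)‖ * ‖fderiv ℝ h u‖ := ContinuousLinearMap.opNorm_comp_le _ _
    _ = ‖h u - z‖ * ‖fderiv ℝ h u‖ := by rw [innerSL_apply_norm]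

theorem antitoneOn_norm_sub_of_gradientFlow {s : Set ℝ} (hh : Differentiable ℝ h)
    (hs : Convex ℝ s)
    (hw : ∀ t ∈ s, HasDerivAt w (-gradient (fun u => ‖h u - z‖ ^ 2 / 2) (w t)) t) :
    AntitoneOn (fun t => ‖h (w t) - z‖) s := by
  have hanti := antitoneOn_comp_of_gradientFlow hh.half_norm_sub_sq hs hw
  intro a ha b hb hab
  have hsq := hanti ha hb hab
  simp only [Function.comp_apply] at hsq
  nlinarith [norm_nonneg (h (w a) - z), norm_nonneg (h (w b) - z)]

theorem gradientFlow_norm_sub_le_of_norm_fderiv_le {a b L : ℝ} (hh : Differentiable ℝ h)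
    (hab : a ≤ b)
    (hw : ∀ t ∈ Icc a b, HasDerivAt w (-gradient (fun u => ‖h u - z‖ ^ 2 / 2) (w t)) t)
    (hL : ∀ t ∈ Ico a b, ‖fderiv ℝ h (w t)‖ ≤ L) :
    ‖w b - w a‖ ≤ L * ‖h (w a) - z‖ * (b - a) := by
  have hres := antitoneOn_norm_sub_of_gradientFlow hh (convex_Icc a b) hw
  refine norm_image_sub_le_of_norm_deriv_le_segment' (fun t ht => (hw t ht).hasDerivWithinAt)
    (fun t ht => ?_) b ⟨hab, le_rfl⟩
  rw [norm_neg]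
  calc _ ≤ ‖fderiv ℝ h (w t)‖ * ‖h (w t) - z‖ := norm_gradient_half_norm_sub_sq_le (hh _)
    _ ≤ L * ‖h (w a) - z‖ :=
      mul_le_mul (hL t ht) (hres ⟨le_rfl, hab⟩ (Ico_subset_Icc_self ht) ht.1) (norm_nonneg _)
        ((norm_nonneg _).trans (hL t ht))

theorem gradientFlow_norm_sub_lt_of_norm_fderiv_le {a b L r : ℝ} (hh : Differentiable ℝ h)
    (hab : a < b)
    (hw : ∀ t ∈ Icc a b, HasDerivAt w (-gradient (fun u => ‖h u - z‖ ^ 2 / 2) (w t)) t)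
    (hL : ∀ t ∈ Ico a b, ‖fderiv ℝ h (w t)‖ ≤ L) (hL0 : 0 < L) (hr : 0 < r)
    (hLr : L * ‖h (w a) - z‖ * (b - a) ≤ r) : ‖w b - w a‖ < r := by
  set m := (a + b) / 2 with hm
  have ham : a ≤ m := by linarith
  have hmb : m ≤ b := by linarith
  have hfirst := gradientFlow_norm_sub_le_of_norm_fderiv_le hh ham
    (fun t ht => hw t ⟨ht.1, ht.2.trans hmb⟩) fun t ht => hL t ⟨ht.1, ht.2.trans_le hmb⟩
  have hsecond := gradientFlow_norm_sub_le_of_norm_fderiv_le hh hmb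
    (fun t ht => hw t ⟨ham.trans ht.1, ht.2⟩) fun t ht => hL t ⟨ham.trans ht.1, ht.2⟩
  have hres := antitoneOn_norm_sub_of_gradientFlow hh (convex_Icc a b) hw
    ⟨le_rfl, hab.le⟩ ⟨ham, hmb⟩ ham
  dsimp only at hres
  rcases hres.lt_or_eq with hlt | heq
  · calc ‖w b - w a‖ ≤ ‖w b - w m‖ + ‖w m - w a‖ := norm_sub_le_norm_sub_add_norm_sub _ _ _
      _ < L * ‖h (w a) - z‖ * (b - a) := by
        have hdecay : L * ‖h (w m) - z‖ * (b - m) < L * ‖h (w a) - z‖ * (b - m) := by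
          gcongr
          linarith
        linarith
      _ ≤ r := hLr
  · have hwm : w m = w a := gradientFlow_eq_of_comp_eq hh.half_norm_sub_sq ham
      (fun t ht => hw t ⟨ht.1, ht.2.trans hmb⟩) (by simp only [heq])
    rw [← hwm]
    rw [heq] at hsecond
    have hhalf : L * ‖h (w a) - z‖ * (b - m) = L * ‖h (w a) - z‖ * (b - a) / 2 := by
      rw [hm]
      ring
    linarith

end SquareLoss

section ExitTime

variable {E : Type*} [NormedAddCommGroup E] {w : ℝ → E} {w₀ : E} {r : ℝ}

noncomputable def exitTime (w : ℝ → E) (w₀ : E) (r : ℝ) : ℝ≥0∞ :=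
  ⨅ t ∈ {s : ℝ | 0 < s ∧ r < ‖w s - w₀‖}, ENNReal.ofReal t

theorem ofReal_le_exitTime_iff {t : ℝ} :
    ENNReal.ofReal t ≤ exitTime w w₀ r ↔ ∀ s, 0 < s → r < ‖w s - w₀‖ → t ≤ s := by
  simp only [exitTime, le_iInf_iff, Set.mem_ofPred_eq, and_imp]
  exact forall_congr' fun s =>
    ⟨fun H hs hsr => (ENNReal.ofReal_le_ofReal_iff hs.le).1 (H hs hsr),
      fun H hs hsr => ENNReal.ofReal_le_ofReal (H hs hsr)⟩

theorem norm_sub_le_of_ofReal_le_exitTime {t : ℝ} (hw : ContinuousAt w t) (hw0 : w 0 = w₀)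
    (hr : 0 ≤ r) (ht : ENNReal.ofReal t ≤ exitTime w w₀ r) {s : ℝ} (hs : s ∈ Icc 0 t) :
    ‖w s - w₀‖ ≤ r := by
  rw [ofReal_le_exitTime_iff] at ht
  by_contra! hsr
  have hs0 : 0 < s := hs.1.lt_of_ne (by rintro rfl; simp [hw0] at hsr; linarith)
  obtain rfl : s = t := le_antisymm hs.2 (ht s hs0 hsr)
  obtain ⟨s', ⟨hs'0, hs's⟩, hs'r⟩ : ∃ s' ∈ Ioo 0 s, r < ‖w s' - w₀‖ :=
    (Filter.Eventually.and (Ioo_mem_nhdsLT hs0) (nhdsWithin_le_nhds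
      ((hw.sub continuousAt_const).norm.eventually (lt_mem_nhds hsr)))).exists
  exact hs's.not_ge (ht s' hs'0 hs'r)

theorem exists_exit_point_of_exitTime_ne_top (hw : ∀ t, 0 ≤ t → ContinuousAt w t)
    (hw0 : w 0 = w₀) (hr : 0 < r) (hfin : exitTime w w₀ r ≠ ∞) :
    ∃ τ, 0 < τ ∧ ENNReal.ofReal τ ≤ exitTime w w₀ r ∧ r ≤ ‖w τ - w₀‖ := by
  set S := {s : ℝ | 0 < s ∧ r < ‖w s - w₀‖}
  have hne : S.Nonempty := by
    rw [nonempty_iff_ne_empty]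
    rintro hS
    exact hfin (by simp [exitTime, S, hS])
  have hbdd : BddBelow S := ⟨0, fun s hs => hs.1.le⟩
  have hτ0 : 0 ≤ sInf S := le_csInf hne fun s hs => hs.1.le
  have hτr : r ≤ ‖w (sInf S) - w₀‖ :=
    ContinuousWithinAt.closure_le (csInf_mem_closure hne hbdd) continuousWithinAt_const
      ((hw _ hτ0).sub continuousAt_const).norm.continuousWithinAt fun s hs => hs.2.le
  refine ⟨sInf S, hτ0.lt_of_ne ?_, ofReal_le_exitTime_iff.2 fun s hs hsr =>
    csInf_le hbdd ⟨hs, hsr⟩, hτr⟩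
  rintro hτ
  rw [← hτ, hw0, sub_self, norm_zero] at hτr
  linarith

end ExitTime

section LazyTraining

variable {E F : Type*} [NormedAddCommGroup E] [InnerProductSpace ℝ E] [CompleteSpace E]
  [NormedAddCommGroup F] [InnerProductSpace ℝ F] {h : E → F} {z : F} {w : ℝ → E} {w₀ : E}
  {r L : ℝ}

theorem gradientFlow_norm_sub_le_of_ofReal_le_exitTime (hh : Differentiable ℝ h)
    (hDh : ∀ u ∈ closedBall w₀ r, ‖fderiv ℝ h u‖ ≤ L)
    (hw : ∀ t, 0 ≤ t → HasDerivAt w (-gradient (fun u => ‖h u - z‖ ^ 2 / 2) (w t)) t)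
    (hw0 : w 0 = w₀) (hr : 0 ≤ r) {t : ℝ} (ht : 0 ≤ t)
    (hle : ENNReal.ofReal t ≤ exitTime w w₀ r) : ‖w t - w₀‖ ≤ L * ‖h w₀ - z‖ * t := by
  have hbound := gradientFlow_norm_sub_le_of_norm_fderiv_le hh ht (fun s hs => hw s hs.1)
    fun s hs => hDh _ (mem_closedBall_iff_norm.2 (norm_sub_le_of_ofReal_le_exitTime
      (hw t ht).continuousAt hw0 hr hle (Ico_subset_Icc_self hs)))
  simpa [hw0] using hbound

theorem gradientFlow_ofReal_lt_exitTime (hh : Differentiable ℝ h)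
    (hDh : ∀ u ∈ closedBall w₀ r, ‖fderiv ℝ h u‖ ≤ L)
    (hw : ∀ t, 0 ≤ t → HasDerivAt w (-gradient (fun u => ‖h u - z‖ ^ 2 / 2) (w t)) t)
    (hw0 : w 0 = w₀) (hr : 0 < r) (hL : 0 < L) {T : ℝ} (hT : L * ‖h w₀ - z‖ * T ≤ r) :
    ENNReal.ofReal T < exitTime w w₀ r := by
  have hcont : ∀ t, 0 ≤ t → ContinuousAt w t := fun t ht => (hw t ht).continuousAt
  rcases eq_or_ne (exitTime w w₀ r) ∞ with htop | htop
  · exact htop ▸ ENNReal.ofReal_lt_top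
  obtain ⟨τ, hτ0, hτ, hτr⟩ := exists_exit_point_of_exitTime_ne_top hcont hw0 hr htop
  have hTτ : T < τ := by
    by_contra! hτT
    have hstay : ‖w τ - w 0‖ < r := by
      refine gradientFlow_norm_sub_lt_of_norm_fderiv_le hh hτ0 (fun s hs => hw s hs.1)
        (fun s hs => hDh _ (mem_closedBall_iff_norm.2 (norm_sub_le_of_ofReal_le_exitTime
          (hcont τ hτ0.le) hw0 hr.le hτ (Ico_subset_Icc_self hs)))) hL hr ?_
      rw [hw0, sub_zero]
      exact (mul_le_mul_of_nonneg_left hτT (by positivity)).trans hT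
    rw [hw0] at hstay
    linarith
  exact ((ENNReal.ofReal_lt_ofReal_iff hτ0).2 hTτ).trans_le hτ

end LazyTraining

theorem lazy_square_loss_exit_time_general
    {p : ℕ} {H : Type*} [NormedAddCommGroup H] [InnerProductSpace ℝ H]
    (h : EuclideanSpace ℝ (Fin p) → H) (hdiff : Differentiable ℝ h)
    (ystar : H) (w₀ : EuclideanSpace ℝ (Fin p))
    (r Lh LDh : ℝ) (hr : 0 < r) (hLh : 0 < Lh)
    (hhLip : ∀ u ∈ Metric.closedBall w₀ r, ∀ v ∈ Metric.closedBall w₀ r,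
      ‖h u - h v‖ ≤ Lh * ‖u - v‖)
    (hDhLip : ∀ u ∈ Metric.closedBall w₀ r, ∀ v ∈ Metric.closedBall w₀ r,
      ‖fderiv ℝ h u - fderiv ℝ h v‖ ≤ LDh * ‖u - v‖)
    (α : ℝ) (hα : 0 < α)
    (w : ℝ → EuclideanSpace ℝ (Fin p)) (hw0 : w 0 = w₀)
    (hwflow : ∀ t : ℝ, 0 ≤ t → HasDerivAt w
      (-(gradient (fun u => ‖α • h u - ystar‖ ^ 2 / 2 / α ^ 2) (w t))) t)
    (K : ℝ)
    (Texit : ℝ≥0∞)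
    (hTexit : Texit = ⨅ t ∈ {s : ℝ | 0 < s ∧ r < ‖w s - w₀‖}, ENNReal.ofReal t) :
    (∀ t : ℝ, 0 ≤ t → ENNReal.ofReal t ≤ Texit →
      ‖w t - w₀‖ ≤ t / α * ‖α • h w₀ - ystar‖ * Lh) ∧
    (K * ‖α • h w₀ - ystar‖ / (r * Lh) ≤ α →
      ENNReal.ofReal (K / Lh ^ 2) < Texit) := by
  set z := α⁻¹ • ystar
  have hres : ‖α • h w₀ - ystar‖ = α * ‖h w₀ - z‖ := by
    rw [norm_smul_sub_eq_abs_mul hα.ne', abs_of_pos hα]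
  have hloss : (fun u => ‖α • h u - ystar‖ ^ 2 / 2 / α ^ 2) = fun u => ‖h u - z‖ ^ 2 / 2 := by
    funext u
    rw [norm_smul_sub_eq_abs_mul hα.ne', mul_pow, sq_abs, mul_div_assoc,
      mul_div_cancel_left₀ _ (pow_ne_zero 2 hα.ne')]
  rw [hloss] at hwflow
  have hDh : ∀ u ∈ closedBall w₀ r, ‖fderiv ℝ h u‖ ≤ Lh := fun u hu =>
    norm_fderiv_le_of_lipschitz_closedBall hr hLh.le hhLip
      (LipschitzOnWith.of_dist_le' (by simpa only [dist_eq_norm] using hDhLip)).continuousOn hu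
  change Texit = exitTime w w₀ r at hTexit
  subst hTexit
  refine ⟨fun t ht hle => ?_, fun hαK => ?_⟩
  · calc ‖w t - w₀‖ ≤ Lh * ‖h w₀ - z‖ * t :=
          gradientFlow_norm_sub_le_of_ofReal_le_exitTime hdiff hDh hwflow hw0 hr.le ht hle
      _ = t / α * ‖α • h w₀ - ystar‖ * Lh := by
          rw [hres]
          field_simp
  · refine gradientFlow_ofReal_lt_exitTime hdiff hDh hwflow hw0 hr hLh ?_
    rw [hres, div_le_iff₀ (by positivity)] at hαK
    have hKr : K * ‖h w₀ - z‖ ≤ r * Lh := le_of_mul_le_mul_left (by linarith) hα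
    calc Lh * ‖h w₀ - z‖ * (K / Lh ^ 2) = K * ‖h w₀ - z‖ / Lh := by field_simp
      _ ≤ r := by rwa [div_le_iff₀ hLh]

/-- **Step 1 of the proof of Theorem 2.2 (exit-time bound).**
With the square loss and the exit time `T_exit := inf {t > 0 : ‖w_α(t) − w₀‖ > r}`,
for every `t ≤ T_exit` one has `‖w_α(t) − w₀‖ ≤ (t/α)‖α h(w₀) − y⋆‖ Lip(h)`; consequently,
if `α ≥ K‖α h(w₀) − y⋆‖/(r Lip(h))` then `T_exit > K / Lip(h)²`. -/
theorem lazy_square_loss_exit_time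
    {p : ℕ} {H : Type*} [NormedAddCommGroup H] [InnerProductSpace ℝ H] [CompleteSpace H]
    (h : EuclideanSpace ℝ (Fin p) → H) (hdiff : Differentiable ℝ h)
    (ystar : H) (w₀ : EuclideanSpace ℝ (Fin p))
    (r Lh LDh : ℝ) (hr : 0 < r) (hLh : 0 < Lh) (hLDh : 0 ≤ LDh)
    (hhLip : ∀ u ∈ Metric.closedBall w₀ r, ∀ v ∈ Metric.closedBall w₀ r,
      ‖h u - h v‖ ≤ Lh * ‖u - v‖)
    (hDhLip : ∀ u ∈ Metric.closedBall w₀ r, ∀ v ∈ Metric.closedBall w₀ r,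
      ‖fderiv ℝ h u - fderiv ℝ h v‖ ≤ LDh * ‖u - v‖)
    (α : ℝ) (hα : 0 < α)
    (w : ℝ → EuclideanSpace ℝ (Fin p)) (hw0 : w 0 = w₀)
    (hwflow : ∀ t : ℝ, 0 ≤ t → HasDerivAt w
      (-(gradient (fun u => ‖α • h u - ystar‖ ^ 2 / 2 / α ^ 2) (w t))) t)
    (K : ℝ) (hK : 0 < K)
    (Texit : ℝ≥0∞)
    (hTexit : Texit = ⨅ t ∈ {s : ℝ | 0 < s ∧ r < ‖w s - w₀‖}, ENNReal.ofReal t) :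
    (∀ t : ℝ, 0 ≤ t → ENNReal.ofReal t ≤ Texit →
      ‖w t - w₀‖ ≤ t / α * ‖α • h w₀ - ystar‖ * Lh) ∧
    (K * ‖α • h w₀ - ystar‖ / (r * Lh) ≤ α →
      ENNReal.ofReal (K / Lh ^ 2) < Texit) :=
  lazy_square_loss_exit_time_general h hdiff ystar w₀ r Lh LDh hr hLh hhLip hDhLip α hα w hw0 hwflow
    K Texit hTexit
end

section
/- Assume ‖h(w₀)‖ ≤ C₀ and α > ‖y⋆‖/C₀. Then for all t ≥ 0, ‖α h(w_α(t)) − y⋆‖ ≤ √κ · ‖α h(w₀) − y⋆‖ · exp(−m σ_min² t / 4). -/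
/-!
Write `y = α h(w)`. Along the flow, `R(y) - R(y⋆)` decreases at rate `‖Dh(w)ᵀ ∇R(y)‖²`. As long
as `w` stays in the ball of radius `σ_min / (2 Lip(Dh))` around `w₀`, `Dh(w)` is `σ_min / 2`-close
to `Dh(w₀)`, so `‖Dh(w)ᵀ z‖ ≥ σ_min ‖z‖ / 2`; combined with the Polyak–Łojasiewicz inequality
`2m (R(y) - R(y⋆)) ≤ ‖∇R(y)‖²` of the strongly convex `R`, this gives Grönwall decay of the loss
at rate `m σ_min² / 2`, and quadratic growth and smoothness of `R` turn it into the claimed decay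
of `‖y - y⋆‖`. Integrating the speed `‖ẇ‖ ≤ α⁻¹ ‖Dh(w)‖ M ‖y - y⋆‖` then shows that `w` moves by
less than the radius, because `‖h(w₀)‖ ≤ C₀` and `α > ‖y⋆‖ / C₀`; a continuity argument shows
that `w` never leaves the ball.
-/

open scoped RealInnerProductSpace Gradient
open Set Real AffineMap

section FirstOrder

variable {H : Type*} [NormedAddCommGroup H] [InnerProductSpace ℝ H] [CompleteSpace H]
  {f : H → ℝ} {a b : H} {m M : ℝ}

lemma hasDerivAt_comp_lineMap {s : ℝ} (hf : DifferentiableAt ℝ f (lineMap a b s)) :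
    HasDerivAt (fun s : ℝ => f (lineMap a b s)) ⟪∇ f (lineMap a b s), b - a⟫ s := by
  simpa only [Function.comp_def, InnerProductSpace.toDual_apply_apply] using
    hf.hasGradientAt.hasFDerivAt.comp_hasDerivAt s hasDerivAt_lineMap

lemma ConvexOn.add_inner_gradient_le (hconv : ConvexOn ℝ univ f) (hf : DifferentiableAt ℝ f a)
    (b : H) : f a + ⟪∇ f a, b - a⟫ ≤ f b := by
  have := (hconv.comp_affineMap (lineMap a b)).le_slope_of_hasDerivAt (mem_univ 0) (mem_univ 1)
    one_pos (hasDerivAt_comp_lineMap (s := 0) (by simpa using hf))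
  simp only [slope_def_field, Function.comp_apply, lineMap_apply_zero, lineMap_apply_one,
    sub_zero, div_one] at this
  linarith

lemma HasGradientAt.sub_half_mul_sq_norm {g : H} (hf : HasGradientAt f g a) (m : ℝ) :
    HasGradientAt (fun x => f x - m / 2 * ‖x‖ ^ 2) (g - m • a) a := by
  rw [hasGradientAt_iff_hasFDerivAt] at hf ⊢
  refine (hf.sub ((hasStrictFDerivAt_norm_sq a).hasFDerivAt.const_mul (m / 2))).congr_fderiv ?_
  ext v
  simp only [sub_apply, InnerProductSpace.toDual_apply_apply,
    smul_apply, innerSL_apply_apply, nsmul_eq_mul, Nat.cast_ofNat, smul_eq_mul,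
    inner_sub_left, real_inner_smul_left]
  ring

lemma StrongConvexOn.add_inner_gradient_add_sq_le (hconv : StrongConvexOn univ m f)
    (hf : DifferentiableAt ℝ f a) (b : H) :
    f a + ⟪∇ f a, b - a⟫ + m / 2 * ‖b - a‖ ^ 2 ≤ f b := by
  have hG := hf.hasGradientAt.sub_half_mul_sq_norm m
  have := (strongConvexOn_iff_convex.mp hconv).add_inner_gradient_le hG.differentiableAt b
  simp only [hG.gradient, inner_sub_left, inner_sub_right, real_inner_smul_left,
    real_inner_self_eq_norm_sq] at this
  rw [norm_sub_sq_real, inner_sub_right, real_inner_comm a b]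
  linarith

lemma StrongConvexOn.mul_sub_le_norm_gradient_sq (hconv : StrongConvexOn univ m f) (hm : 0 ≤ m)
    (hf : DifferentiableAt ℝ f a) (b : H) : 2 * m * (f a - f b) ≤ ‖∇ f a‖ ^ 2 := by
  have h := hconv.add_inner_gradient_add_sq_le hf b
  have hcs := real_inner_le_norm (∇ f a) (a - b)
  rw [← neg_sub b a, inner_neg_right, norm_neg] at hcs
  nlinarith [sq_nonneg (‖∇ f a‖ - m * ‖b - a‖)]

lemma IsLocalMin.gradient_eq_zero (h : IsLocalMin f a) : ∇ f a = 0 := by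
  simp [gradient, h.fderiv_eq_zero]

lemma StrongConvexOn.sq_norm_sub_le (hconv : StrongConvexOn univ m f) (hmin : IsMinOn f univ a)
    (hf : DifferentiableAt ℝ f a) (b : H) : m / 2 * ‖b - a‖ ^ 2 ≤ f b - f a := by
  have := hconv.add_inner_gradient_add_sq_le hf b
  rw [(hmin.isLocalMin Filter.univ_mem).gradient_eq_zero, inner_zero_left] at this
  linarith

lemma le_add_inner_gradient_add_sq (hf : Differentiable ℝ f)
    (hL : ∀ y, ‖∇ f y - ∇ f a‖ ≤ M * ‖y - a‖) (b : H) :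
    f b ≤ f a + ⟪∇ f a, b - a⟫ + M / 2 * ‖b - a‖ ^ 2 := by
  set g : ℝ → ℝ := fun s => f (lineMap a b s) - s * ⟪∇ f a, b - a⟫ - M / 2 * ‖b - a‖ ^ 2 * s ^ 2
  have hg : ∀ s, HasDerivAt g (⟪∇ f (lineMap a b s) - ∇ f a, b - a⟫ - M * ‖b - a‖ ^ 2 * s) s := by
    intro s
    have := ((hasDerivAt_comp_lineMap (a := a) (b := b) (hf _)).sub
      ((hasDerivAt_id s).mul_const ⟪∇ f a, b - a⟫)).sub
      ((hasDerivAt_pow 2 s).const_mul (M / 2 * ‖b - a‖ ^ 2))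
    refine this.congr_deriv ?_
    rw [inner_sub_left]
    ring
  obtain ⟨c, hc, hgc⟩ := exists_hasDerivAt_eq_slope g _ one_pos
    (fun s _ => (hg s).continuousAt.continuousWithinAt) (fun s _ => hg s)
  have hslope : ⟪∇ f (lineMap a b c) - ∇ f a, b - a⟫ ≤ M * ‖b - a‖ ^ 2 * c := by
    calc _ ≤ ‖∇ f (lineMap a b c) - ∇ f a‖ * ‖b - a‖ := real_inner_le_norm _ _
      _ ≤ M * ‖lineMap a b c - a‖ * ‖b - a‖ := by gcongr; exact hL _
      _ = M * ‖b - a‖ ^ 2 * c := by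
        rw [← vsub_eq_sub, lineMap_vsub_left, norm_smul, norm_of_nonneg hc.1.le, vsub_eq_sub]
        ring
  simp only [g, lineMap_apply_zero, lineMap_apply_one, sub_zero, div_one] at hgc
  linarith

lemma StrongConvexOn.norm_sub_le_of_sub_le_mul_sq (hconv : StrongConvexOn univ m f) (hm : 0 < m)
    (hM : 0 ≤ M) (hf : Differentiable ℝ f) (hL : ∀ y, ‖∇ f y - ∇ f a‖ ≤ M * ‖y - a‖)
    (hmin : IsMinOn f univ a) {y y₀ : H} {e : ℝ} (he : 0 ≤ e)
    (h : f y - f a ≤ (f y₀ - f a) * e ^ 2) : ‖y - a‖ ≤ √(M / m) * ‖y₀ - a‖ * e := by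
  have hgrowth := hconv.sq_norm_sub_le hmin (hf a) y
  have hsmooth := le_add_inner_gradient_add_sq hf hL y₀
  rw [(hmin.isLocalMin Filter.univ_mem).gradient_eq_zero, inner_zero_left, add_zero] at hsmooth
  have hsq : ‖y - a‖ ^ 2 ≤ (√(M / m) * ‖y₀ - a‖ * e) ^ 2 := by
    rw [mul_pow, mul_pow, sq_sqrt (by positivity), div_mul_eq_mul_div, div_mul_eq_mul_div,
      le_div_iff₀ hm]
    nlinarith [sq_nonneg e]
  exact (pow_le_pow_iff_left₀ (norm_nonneg _) (by positivity) two_ne_zero).mp hsq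

end FirstOrder

section HilbertSpace

variable {E F : Type*} [NormedAddCommGroup E] [InnerProductSpace ℝ E] [CompleteSpace E]
  [NormedAddCommGroup F] [InnerProductSpace ℝ F] [CompleteSpace F]

namespace ContinuousLinearMap

lemma sub_mul_norm_le_norm_adjoint_apply {A B : E →L[ℝ] F} {σ δ : ℝ}
    (hA : ∀ y, σ * ‖y‖ ≤ ‖A.adjoint y‖) (hAB : ‖B - A‖ ≤ δ) (y : F) :
    (σ - δ) * ‖y‖ ≤ ‖B.adjoint y‖ := by
  have h : ‖A.adjoint y‖ ≤ ‖B.adjoint y‖ + δ * ‖y‖ := calc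
    ‖A.adjoint y‖ ≤ ‖B.adjoint y‖ + ‖(B - A).adjoint y‖ := by
      simpa [map_sub, norm_sub_rev] using norm_le_norm_add_norm_sub' (A.adjoint y) (B.adjoint y)
    _ ≤ ‖B.adjoint y‖ + δ * ‖y‖ := by
      gcongr
      exact ((B - A).adjoint.le_opNorm y).trans (by rw [adjoint.norm_map]; gcongr)
  linarith [hA y]

lemma le_opNorm_of_le_norm_adjoint_apply [Nontrivial F] {A : E →L[ℝ] F} {σ : ℝ}
    (hA : ∀ y, σ * ‖y‖ ≤ ‖A.adjoint y‖) : σ ≤ ‖A‖ := by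
  obtain ⟨y, hy⟩ := exists_ne (0 : F)
  refine le_of_mul_le_mul_right ((hA y).trans ?_) (norm_pos_iff.mpr hy)
  simpa [adjoint.norm_map] using A.adjoint.le_opNorm y

end ContinuousLinearMap

lemma hasGradientAt_comp_smul_div_sq {h : E → F} {R : F → ℝ} {α : ℝ} {u : E} (hα : α ≠ 0)
    (hh : DifferentiableAt ℝ h u) (hR : DifferentiableAt ℝ R (α • h u)) :
    HasGradientAt (fun u => R (α • h u) / α ^ 2)
      (α⁻¹ • (fderiv ℝ h u).adjoint (∇ R (α • h u))) u := by
  rw [hasGradientAt_iff_hasFDerivAt]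
  simp_rw [div_eq_inv_mul]
  have hcomp : HasFDerivAt (fun u => R (α • h u)) _ u :=
    hR.hasFDerivAt.comp u (hh.hasFDerivAt.const_smul α)
  refine (hcomp.const_mul (α ^ 2)⁻¹).congr_fderiv ?_
  ext v
  simp only [ContinuousLinearMap.comp_smulₛₗ, smul_apply,
    ContinuousLinearMap.comp_apply, smul_eq_mul, map_smul, InnerProductSpace.toDual_apply_apply,
    ContinuousLinearMap.adjoint_inner_left, inner_gradient_left, RingHom.id_apply]
  field_simp

end HilbertSpace

lemma sub_le_mul_exp_of_hasDerivAt_neg_gradient {E : Type*} [NormedAddCommGroup E]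
    [InnerProductSpace ℝ E] [CompleteSpace E] {F : E → ℝ} {w : ℝ → E} {c lam T : ℝ}
    (hF : ∀ t ∈ Icc 0 T, DifferentiableAt ℝ F (w t))
    (hw : ∀ t ∈ Icc 0 T, HasDerivAt w (-∇ F (w t)) t)
    (hPL : ∀ t ∈ Ico 0 T, lam * (F (w t) - c) ≤ ‖∇ F (w t)‖ ^ 2) :
    ∀ t ∈ Icc 0 T, F (w t) - c ≤ (F (w 0) - c) * exp (-(lam * t)) := by
  have hderiv : ∀ t ∈ Icc 0 T, HasDerivAt (fun t => F (w t) - c) (-‖∇ F (w t)‖ ^ 2) t := by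
    intro t ht
    have := ((hF t ht).hasGradientAt.hasFDerivAt.comp_hasDerivAt t (hw t ht)).sub_const c
    simpa only [Function.comp_def, InnerProductSpace.toDual_apply_apply, inner_neg_right,
      real_inner_self_eq_norm_sq] using this
  intro t ht
  simpa [gronwallBound_ε0] using le_gronwallBound_of_liminf_deriv_right_le (ε := 0) (K := -lam)
    (fun t ht => (hderiv t ht).continuousAt.continuousWithinAt)
    (fun t ht _ hr => (hderiv t (Ico_subset_Icc_self ht)).hasDerivWithinAt.liminf_right_slope_le hr)
    le_rfl (fun t ht => by linarith [hPL t ht]) t ht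

lemma norm_sub_le_div_of_norm_deriv_le_mul_exp {E : Type*} [NormedAddCommGroup E]
    [NormedSpace ℝ E] {w w' : ℝ → E} {c μ T : ℝ} (hμ : 0 < μ)
    (hc : 0 ≤ c) (hT : 0 ≤ T) (hw : ∀ t ∈ Icc 0 T, HasDerivAt w (w' t) t)
    (hw' : ∀ t ∈ Ico 0 T, ‖w' t‖ ≤ c * exp (-(μ * t))) : ‖w T - w 0‖ ≤ c / μ := by
  have hB : ∀ t, HasDerivAt (fun t => c / μ * (1 - exp (-(μ * t)))) (c * exp (-(μ * t))) t := by
    intro t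
    refine ((((hasDerivAt_id t).const_mul μ).neg.exp.const_sub 1).const_mul (c / μ)).congr_deriv ?_
    simp only [Pi.neg_apply, _root_.id, mul_one, mul_neg, neg_neg]
    field_simp
  have := image_norm_le_of_norm_deriv_right_le_deriv_boundary (f := fun t => w t - w 0)
    (fun t ht => ((hw t ht).sub_const _).continuousAt.continuousWithinAt)
    (fun t ht => ((hw t (Ico_subset_Icc_self ht)).sub_const _).hasDerivWithinAt)
    (by simp) hB hw' (right_mem_Icc.mpr hT)
  exact this.trans (mul_le_of_le_one_right (by positivity) (by linarith [exp_pos (-(μ * T))]))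

lemma lt_of_forall_Ico_le_imp_lt {f : ℝ → ℝ} {r : ℝ} (hf : ∀ t, 0 ≤ t → ContinuousAt f t)
    (h : ∀ T, 0 ≤ T → (∀ s ∈ Ico 0 T, f s ≤ r) → f T < r) (t : ℝ) (ht : 0 ≤ t) : f t < r := by
  by_contra! hfirst
  set S := {s | 0 ≤ s ∧ r ≤ f s}
  have hS : S.Nonempty := ⟨t, ht, hfirst⟩
  have hSbdd : BddBelow S := ⟨0, fun s hs => hs.1⟩
  have hT : 0 ≤ sInf S := le_csInf hS fun s hs => hs.1
  have hbefore : ∀ s ∈ Ico 0 (sInf S), f s ≤ r := fun s hs =>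
    le_of_not_ge fun hrs => (csInf_le hSbdd ⟨hs.1, hrs⟩).not_gt hs.2
  have hat : r ≤ f (sInf S) := ContinuousWithinAt.closure_le (csInf_mem_closure hS hSbdd)
    continuousWithinAt_const (hf _ hT).continuousWithinAt fun s hs => hs.2
  exact (h _ hT hbefore).not_ge hat

section LazyTraining

variable {E H : Type*} [NormedAddCommGroup E] [InnerProductSpace ℝ E] [CompleteSpace E]
  [NormedAddCommGroup H] [InnerProductSpace ℝ H] [CompleteSpace H]
  {h : E → H} {R : H → ℝ} {ystar : H} {w : ℝ → E} {m M α s T : ℝ}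

lemma norm_smul_sub_le_of_lazy_flow (hh : Differentiable ℝ h) (hR : Differentiable ℝ R)
    (hconv : StrongConvexOn univ m R) (hm : 0 < m) (hM : 0 ≤ M)
    (hRgrad : ∀ y, ‖∇ R y - ∇ R ystar‖ ≤ M * ‖y - ystar‖) (hmin : IsMinOn R univ ystar)
    (hα : α ≠ 0) (hs : 0 ≤ s)
    (hw : ∀ t ∈ Icc 0 T, HasDerivAt w (-∇ (fun u => R (α • h u) / α ^ 2) (w t)) t)
    (hDh : ∀ t ∈ Ico 0 T, ∀ y, s * ‖y‖ ≤ ‖(fderiv ℝ h (w t)).adjoint y‖) :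
    ∀ t ∈ Icc 0 T, ‖α • h (w t) - ystar‖ ≤
      √(M / m) * ‖α • h (w 0) - ystar‖ * exp (-(m * s ^ 2 * t)) := by
  set F := fun u => R (α • h u) / α ^ 2
  have hgradF (u : E) : HasGradientAt F (α⁻¹ • (fderiv ℝ h u).adjoint (∇ R (α • h u))) u :=
    hasGradientAt_comp_smul_div_sq hα (hh u) (hR _)
  have hPL : ∀ t ∈ Ico 0 T, 2 * m * s ^ 2 * (F (w t) - R ystar / α ^ 2) ≤ ‖∇ F (w t)‖ ^ 2 := by
    intro t ht
    set g := ∇ R (α • h (w t))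
    have hRPL := hconv.mul_sub_le_norm_gradient_sq hm.le (hR (α • h (w t))) ystar
    have hadj : s ^ 2 * ‖g‖ ^ 2 ≤ ‖(fderiv ℝ h (w t)).adjoint g‖ ^ 2 := by
      rw [← mul_pow]; gcongr; exact hDh t ht g
    rw [(hgradF _).gradient, norm_smul, mul_pow, norm_inv, norm_eq_abs, inv_pow, sq_abs]
    calc 2 * m * s ^ 2 * (F (w t) - R ystar / α ^ 2)
        = (α ^ 2)⁻¹ * (s ^ 2 * (2 * m * (R (α • h (w t)) - R ystar))) := by
          simp only [F]; field_simp
      _ ≤ (α ^ 2)⁻¹ * ‖(fderiv ℝ h (w t)).adjoint g‖ ^ 2 := by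
          gcongr; exact (mul_le_mul_of_nonneg_left hRPL (by positivity)).trans hadj
  intro t ht
  have hdecay := sub_le_mul_exp_of_hasDerivAt_neg_gradient
    (fun t _ => (hgradF (w t)).differentiableAt) hw hPL t ht
  refine hconv.norm_sub_le_of_sub_le_mul_sq hm hM hR hRgrad hmin (exp_pos _).le ?_
  have hexp : exp (-(m * s ^ 2 * t)) ^ 2 = exp (-(2 * m * s ^ 2 * t)) := by
    rw [← exp_nat_mul]; ring_nf
  rw [hexp]
  simp only [F] at hdecay
  rwa [← sub_div, ← sub_div, div_mul_eq_mul_div, div_le_div_iff_of_pos_right (by positivity)]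
    at hdecay

lemma norm_sub_le_of_lazy_flow (hh : Differentiable ℝ h) (hR : Differentiable ℝ R)
    (hconv : StrongConvexOn univ m R) (hm : 0 < m) (hM : 0 ≤ M)
    (hRgrad : ∀ y, ‖∇ R y - ∇ R ystar‖ ≤ M * ‖y - ystar‖) (hmin : IsMinOn R univ ystar)
    (hα : α ≠ 0) (hs : 0 < s) (hT : 0 ≤ T)
    (hw : ∀ t ∈ Icc 0 T, HasDerivAt w (-∇ (fun u => R (α • h u) / α ^ 2) (w t)) t)
    (hDh : ∀ t ∈ Ico 0 T, ∀ y, s * ‖y‖ ≤ ‖(fderiv ℝ h (w t)).adjoint y‖)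
    {D : ℝ} (hD : 0 ≤ D) (hDw : ∀ t ∈ Ico 0 T, ‖fderiv ℝ h (w t)‖ ≤ D) :
    ‖w T - w 0‖ ≤ |α|⁻¹ * D * M * √(M / m) * ‖α • h (w 0) - ystar‖ / (m * s ^ 2) := by
  have hgrad_star : ∇ R ystar = 0 := (hmin.isLocalMin Filter.univ_mem).gradient_eq_zero
  refine norm_sub_le_div_of_norm_deriv_le_mul_exp (by positivity) (by positivity) hT hw ?_
  intro t ht
  have hdecay := norm_smul_sub_le_of_lazy_flow hh hR hconv hm hM hRgrad hmin hα hs.le hw hDh t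
    (Ico_subset_Icc_self ht)
  have hgrad : ‖∇ R (α • h (w t))‖ ≤ M * ‖α • h (w t) - ystar‖ := by
    simpa [hgrad_star] using hRgrad (α • h (w t))
  rw [norm_neg, (hasGradientAt_comp_smul_div_sq hα (hh _) (hR _)).gradient, norm_smul, norm_inv,
    norm_eq_abs]
  calc |α|⁻¹ * ‖(fderiv ℝ h (w t)).adjoint (∇ R (α • h (w t)))‖
      ≤ |α|⁻¹ * (D * (M * ‖α • h (w t) - ystar‖)) := by
        gcongr
        refine ((fderiv ℝ h (w t)).adjoint.le_opNorm _).trans ?_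
        rw [ContinuousLinearMap.adjoint.norm_map]
        gcongr
        exact hDw t ht
    _ ≤ |α|⁻¹ * (D * (M * (√(M / m) * ‖α • h (w 0) - ystar‖ * exp (-(m * s ^ 2 * t))))) := by
        gcongr
    _ = _ := by ring

end LazyTraining

/-- This is where `C₀` comes from: it keeps the displacement bound of `norm_sub_le_of_lazy_flow`
(with `‖Dh‖ ≤ D + σ / 2`) below `3 / 4` of the radius `σ / (2 L)` on which `Dh` stays
`σ / 2`-close to `Dh(w₀)`. -/
lemma lazy_displacement_lt_radius {H : Type*} [NormedAddCommGroup H] [NormedSpace ℝ H]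
    {x y : H} {σ D L m M C α : ℝ} (hσ : 0 < σ) (hσD : σ ≤ D) (hL : 0 < L) (hm : 0 < m)
    (hM : 0 < M) (hC : C = σ ^ 3 / (32 * (M / m) ^ ((3 : ℝ) / 2) * D * L)) (hα : 0 < α)
    (hx : ‖x‖ ≤ C) (hy : ‖y‖ < α * C) :
    |α|⁻¹ * (D + σ / 2) * M * √(M / m) * ‖α • x - y‖ / (m * (σ / 2) ^ 2) < σ / (2 * L) := by
  have hxy : ‖α • x - y‖ < 2 * α * C := calc
    _ ≤ α * ‖x‖ + ‖y‖ := by simpa [norm_smul, abs_of_pos hα] using norm_sub_le (α • x) y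
    _ < α * C + α * C := add_lt_add_of_le_of_lt (by gcongr) hy
    _ = 2 * α * C := by ring
  have hκ : (M / m) ^ ((3 : ℝ) / 2) = M / m * √(M / m) := by
    rw [sqrt_eq_rpow, ← rpow_one_add' (by positivity) (by norm_num)]; norm_num
  have hD : 0 < D := hσ.trans_le hσD
  have : 0 < √(M / m) := by positivity
  calc _ < α⁻¹ * (D + σ / 2) * M * √(M / m) * (2 * α * C) / (m * (σ / 2) ^ 2) := by
        rw [abs_of_pos hα]; gcongr
    _ ≤ α⁻¹ * (3 / 2 * D) * M * √(M / m) * (2 * α * C) / (m * (σ / 2) ^ 2) := by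
        have : 0 ≤ C := (norm_nonneg x).trans hx
        gcongr; linarith
    _ = 3 / 4 * (σ / (2 * L)) := by rw [hC, hκ]; field_simp; ring
    _ < σ / (2 * L) := by linarith [show 0 < σ / (2 * L) by positivity]

theorem lazy_overparam_linear_convergence_general
    {p : ℕ} {H : Type*} [NormedAddCommGroup H] [InnerProductSpace ℝ H] [CompleteSpace H]
    (h : EuclideanSpace ℝ (Fin p) → H) (hdiff : Differentiable ℝ h)
    (LDh : ℝ) (hLDh : 0 < LDh)
    (hDhLip : ∀ u v, ‖fderiv ℝ h u - fderiv ℝ h v‖ ≤ LDh * ‖u - v‖)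
    (R : H → ℝ) (hRdiff : Differentiable ℝ R)
    (m M : ℝ) (hm : 0 < m) (hM : 0 < M)
    (hRconv : ConvexOn ℝ Set.univ (fun y => R y - m / 2 * ‖y‖ ^ 2))
    (hRgrad : ∀ y z, ‖gradient R y - gradient R z‖ ≤ M * ‖y - z‖)
    (ystar : H) (hmin : ∀ y, R ystar ≤ R y)
    (w₀ : EuclideanSpace ℝ (Fin p))
    (σmin : ℝ) (hσ : 0 < σmin)
    (hσmin : ∀ y : H, σmin * ‖y‖ ≤ ‖(fderiv ℝ h w₀).adjoint y‖)
    (C₀ : ℝ)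
    (hC₀ : C₀ = σmin ^ 3 / (32 * (M / m) ^ ((3 : ℝ) / 2) * ‖fderiv ℝ h w₀‖ * LDh))
    (hinit : ‖h w₀‖ ≤ C₀)
    (α : ℝ) (hα : ‖ystar‖ / C₀ < α)
    (w : ℝ → EuclideanSpace ℝ (Fin p)) (hw0 : w 0 = w₀)
    (hwflow : ∀ t : ℝ, 0 ≤ t → HasDerivAt w
      (-(gradient (fun u => R (α • h u) / α ^ 2) (w t))) t) :
    ∀ t : ℝ, 0 ≤ t →
      ‖α • h (w t) - ystar‖ ≤
        Real.sqrt (M / m) * ‖α • h w₀ - ystar‖ * Real.exp (-(m * σmin ^ 2 * t / 4)) := by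
  subst hw0
  rcases subsingleton_or_nontrivial H with hH | hH
  · intro t _
    rw [Subsingleton.elim (α • h (w t) - ystar) 0, norm_zero]
    positivity
  have hRsc : StrongConvexOn univ m R := strongConvexOn_iff_convex.mpr hRconv
  have hRgrad' (y : H) : ‖∇ R y - ∇ R ystar‖ ≤ M * ‖y - ystar‖ := hRgrad y ystar
  have hmin' : IsMinOn R univ ystar := fun y _ => hmin y
  have hσD := ContinuousLinearMap.le_opNorm_of_le_norm_adjoint_apply hσmin
  have hC₀pos : 0 < C₀ := by rw [hC₀]; have := hσ.trans_le hσD; positivity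
  have hαpos : 0 < α := (div_nonneg (norm_nonneg _) hC₀pos.le).trans_lt hα
  have hflow (T : ℝ) : ∀ t ∈ Icc 0 T, HasDerivAt w (-∇ (fun u => R (α • h u) / α ^ 2) (w t)) t :=
    fun t ht => hwflow t ht.1
  set r := σmin / (2 * LDh)
  have hnear (T : ℝ) (hball : ∀ s ∈ Ico 0 T, ‖w s - w 0‖ ≤ r) (t) (ht : t ∈ Ico 0 T) :
      ‖fderiv ℝ h (w t) - fderiv ℝ h (w 0)‖ ≤ σmin / 2 := calc
    _ ≤ LDh * r := (hDhLip _ _).trans (by gcongr; exact hball t ht)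
    _ = σmin / 2 := by simp only [r]; field_simp
  have hlower (T : ℝ) (hball : ∀ s ∈ Ico 0 T, ‖w s - w 0‖ ≤ r) (t) (ht : t ∈ Ico 0 T) (y : H) :
      σmin / 2 * ‖y‖ ≤ ‖(fderiv ℝ h (w t)).adjoint y‖ := by
    simpa [sub_half] using ContinuousLinearMap.sub_mul_norm_le_norm_adjoint_apply hσmin
      (hnear T hball t ht) y
  have hstay (T : ℝ) (hT : 0 ≤ T) (hball : ∀ s ∈ Ico 0 T, ‖w s - w 0‖ ≤ r) :
      ‖w T - w 0‖ < r := by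
    have hupper (t) (ht : t ∈ Ico 0 T) : ‖fderiv ℝ h (w t)‖ ≤ ‖fderiv ℝ h (w 0)‖ + σmin / 2 :=
      (norm_le_norm_add_norm_sub' _ _).trans (by gcongr; exact hnear T hball t ht)
    exact (norm_sub_le_of_lazy_flow hdiff hRdiff hRsc hm hM.le hRgrad' hmin' hαpos.ne'
      (by positivity) hT (hflow T) (hlower T hball) (by positivity) hupper).trans_lt
      (lazy_displacement_lt_radius hσ hσD hLDh hm hM hC₀ hαpos hinit ((div_lt_iff₀ hC₀pos).mp hα))
  have htrap := lt_of_forall_Ico_le_imp_lt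
    (fun t ht => ((hwflow t ht).continuousAt.sub continuousAt_const).norm) hstay
  intro t ht
  convert norm_smul_sub_le_of_lazy_flow hdiff hRdiff hRsc hm hM.le hRgrad' hmin' hαpos.ne'
    (by positivity) (hflow t) (hlower t fun s hs => (htrap s hs.1).le) t ⟨ht, le_rfl⟩ using 3
  ring

/-- **Theorem 2.3 (Over-parameterized lazy training), linear convergence.**
If `R` is `m`-strongly convex and `M`-smooth with minimizer `y⋆`, the smallest singular
value `σ_min` of `Dh(w₀)ᵀ` is positive, `‖h(w₀)‖ ≤ C₀ := σ_min³/(32 κ^{3/2} ‖Dh(w₀)‖ Lip(Dh))`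
and `α > ‖y⋆‖/C₀`, then `‖α h(w_α(t)) − y⋆‖ ≤ √κ ‖α h(w₀) − y⋆‖ exp(−m σ_min² t/4)`. -/
theorem lazy_overparam_linear_convergence
    {p : ℕ} {H : Type*} [NormedAddCommGroup H] [InnerProductSpace ℝ H] [CompleteSpace H]
    (h : EuclideanSpace ℝ (Fin p) → H) (hdiff : Differentiable ℝ h)
    (LDh : ℝ) (hLDh : 0 < LDh)
    (hDhLip : ∀ u v, ‖fderiv ℝ h u - fderiv ℝ h v‖ ≤ LDh * ‖u - v‖)
    (R : H → ℝ) (hRnonneg : ∀ y, 0 ≤ R y) (hRdiff : Differentiable ℝ R)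
    (m M : ℝ) (hm : 0 < m) (hM : 0 < M)
    (hRconv : ConvexOn ℝ Set.univ (fun y => R y - m / 2 * ‖y‖ ^ 2))
    (hRgrad : ∀ y z, ‖gradient R y - gradient R z‖ ≤ M * ‖y - z‖)
    (ystar : H) (hmin : ∀ y, R ystar ≤ R y)
    (w₀ : EuclideanSpace ℝ (Fin p))
    (σmin : ℝ) (hσ : 0 < σmin)
    (hσmin : ∀ y : H, σmin * ‖y‖ ≤ ‖(fderiv ℝ h w₀).adjoint y‖)
    (C₀ : ℝ)
    (hC₀ : C₀ = σmin ^ 3 / (32 * (M / m) ^ ((3 : ℝ) / 2) * ‖fderiv ℝ h w₀‖ * LDh))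
    (hinit : ‖h w₀‖ ≤ C₀)
    (α : ℝ) (hα : ‖ystar‖ / C₀ < α)
    (w : ℝ → EuclideanSpace ℝ (Fin p)) (hw0 : w 0 = w₀)
    (hwflow : ∀ t : ℝ, 0 ≤ t → HasDerivAt w
      (-(gradient (fun u => R (α • h u) / α ^ 2) (w t))) t) :
    ∀ t : ℝ, 0 ≤ t →
      ‖α • h (w t) - ystar‖ ≤
        Real.sqrt (M / m) * ‖α • h w₀ - ystar‖ * Real.exp (-(m * σmin ^ 2 * t / 4)) :=
  lazy_overparam_linear_convergence_general h hdiff LDh hLDh hDhLip R hRdiff m M hm hM hRconv hRgrad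
    ystar hmin w₀ σmin hσ hσmin C₀ hC₀ hinit α hα w hw0 hwflow
end

section
/- Assume moreover h(w₀) = 0. Then there exist constants C > 0 and α₀ > ‖y⋆‖/C₀ such that for all α ≥ α₀, sup_{t ≥ 0} ‖w_α(t) − w₀‖ ≤ C/α. -/
open scoped RealInnerProductSpace

open Set Filter Topology

/-!
Near `w₀` the smallest singular value of `Dh(w)ᵀ` stays above `σ_min / 2` (on the ball of radius
`r = σ_min / (2 Lip(Dh))`), so there `F_α` satisfies a Polyak–Łojasiewicz inequality
`2 μ (F_α - min F_α) ≤ ‖∇F_α‖²` with `μ = m σ_min² / 4`, uniformly in `α`. Along the gradient flow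
the gap `g = F_α(w) - min F_α` has derivative `-‖ẇ‖²`, so `√g` decreases at rate at least
`√(μ / 2) ‖ẇ‖` and the path has length at most `√(2 g(0) / μ)`. As `h(w₀) = 0`,
`g(0) = (R 0 - R y⋆) / α² ≤ M ‖y⋆‖² / α²`: the length is `O(1 / α)`, below `r` once `α` is large,
so the flow never leaves the ball where the estimate holds.
-/

theorem ConvexOn.add_fderiv_sub_le {E : Type*} [NormedAddCommGroup E] [NormedSpace ℝ E]
    {g : E → ℝ} (hg : ConvexOn ℝ univ g) {y : E} (hd : DifferentiableAt ℝ g y) (z : E) :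
    g y + fderiv ℝ g y (z - y) ≤ g z := by
  have hline : ConvexOn ℝ univ (g ∘ (AffineMap.lineMap y z : ℝ → E)) := by
    simpa using hg.comp_affineMap (AffineMap.lineMap y z : ℝ →ᵃ[ℝ] E)
  have hder : HasDerivAt (g ∘ (AffineMap.lineMap y z : ℝ → E)) (fderiv ℝ g y (z - y)) 0 := by
    have hg' : HasFDerivAt g (fderiv ℝ g y) (AffineMap.lineMap y z (0 : ℝ)) := by
      simpa using hd.hasFDerivAt
    exact hg'.comp_hasDerivAt 0 AffineMap.hasDerivAt_lineMap
  have := hline.le_slope_of_hasDerivAt (mem_univ 0) (mem_univ 1) one_pos hder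
  simp only [slope_def_field, Function.comp_apply, AffineMap.lineMap_apply_one,
    AffineMap.lineMap_apply_zero, sub_zero, div_one] at this
  linarith

section Hilbert

variable {H : Type*} [NormedAddCommGroup H] [InnerProductSpace ℝ H] [CompleteSpace H] {y : H}

theorem StrongConvexOn.add_inner_gradient_add_le {R : H → ℝ} {m : ℝ}
    (hR : StrongConvexOn univ m R) (hRd : DifferentiableAt ℝ R y) (z : H) :
    R y + ⟪gradient R y, z - y⟫ + m / 2 * ‖z - y‖ ^ 2 ≤ R z := by
  have hgd : HasFDerivAt (fun y => R y - m / 2 * ‖y‖ ^ 2)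
      (fderiv ℝ R y - (m / 2) • (2 • innerSL ℝ y)) y :=
    hRd.hasFDerivAt.sub ((hasStrictFDerivAt_norm_sq y).hasFDerivAt.const_mul (m / 2))
  have key := (strongConvexOn_iff_convex.1 hR).add_fderiv_sub_le hgd.differentiableAt z
  rw [hgd.fderiv] at key
  simp only [sub_apply, smul_apply, innerSL_apply_apply,
    ← inner_gradient_left, smul_eq_mul, nsmul_eq_mul] at key
  have hsq : ‖z - y‖ ^ 2 = ‖z‖ ^ 2 - ‖y‖ ^ 2 - 2 * ⟪y, z - y⟫ := by
    rw [norm_sub_sq_real, inner_sub_right, real_inner_self_eq_norm_sq, real_inner_comm]; ring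
  rw [hsq]; push_cast at key; linarith

theorem StrongConvexOn.mul_sub_le_norm_gradient_sq_s7 {R : H → ℝ} {m : ℝ} (hm : 0 ≤ m)
    (hR : StrongConvexOn univ m R) (hRd : DifferentiableAt ℝ R y) (z : H) :
    2 * m * (R y - R z) ≤ ‖gradient R y‖ ^ 2 := by
  have hfo := hR.add_inner_gradient_add_le hRd z
  have hcs := neg_le_of_abs_le (abs_real_inner_le_norm (gradient R y) (z - y))
  nlinarith [sq_nonneg (‖gradient R y‖ - m * ‖z - y‖), norm_nonneg (z - y)]

theorem sub_le_mul_norm_sub_sq_of_norm_gradient_le {R : H → ℝ} {M : ℝ} {ystar : H} (hM : 0 ≤ M)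
    (hRd : Differentiable ℝ R) (hgrad : ∀ y, ‖gradient R y‖ ≤ M * ‖y - ystar‖) (z : H) :
    R z - R ystar ≤ M * ‖z - ystar‖ ^ 2 := by
  have hbound : ∀ x ∈ Metric.closedBall ystar ‖z - ystar‖, ‖fderiv ℝ R x‖ ≤ M * ‖z - ystar‖ := by
    intro x hx
    rw [← toDual_gradient, LinearIsometryEquiv.norm_map]
    exact (hgrad x).trans (mul_le_mul_of_nonneg_left (mem_closedBall_iff_norm.1 hx) hM)
  have := (convex_closedBall ystar ‖z - ystar‖).norm_image_sub_le_of_norm_fderiv_le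
    (fun x _ => hRd x) hbound (Metric.mem_closedBall_self (norm_nonneg _))
    (mem_closedBall_iff_norm.2 le_rfl)
  nlinarith [le_abs_self (R z - R ystar), Real.norm_eq_abs (R z - R ystar)]

end Hilbert

section GradientCalculus

variable {E H : Type*} [NormedAddCommGroup E] [InnerProductSpace ℝ E] [CompleteSpace E]
  [NormedAddCommGroup H] [InnerProductSpace ℝ H] [CompleteSpace H]

theorem HasGradientAt.comp_hasFDerivAt {R : H → ℝ} {G : H} {k : E → H} {k' : E →L[ℝ] H} {u : E}
    (hR : HasGradientAt R G (k u)) (hk : HasFDerivAt k k' u) :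
    HasGradientAt (R ∘ k) (k'.adjoint G) u := by
  have hdual : InnerProductSpace.toDual ℝ E (k'.adjoint G)
      = (InnerProductSpace.toDual ℝ H G).comp k' := by
    ext v
    simp [ContinuousLinearMap.adjoint_inner_left]
  rw [hasGradientAt_iff_hasFDerivAt, hdual]
  exact hR.hasFDerivAt.comp u hk

theorem HasGradientAt.div_const {f : E → ℝ} {G u : E} (hf : HasGradientAt f G u) (c : ℝ) :
    HasGradientAt (fun x => f x / c) (c⁻¹ • G) u := by
  rw [hasGradientAt_iff_hasFDerivAt, map_smul]
  simpa only [div_eq_mul_inv] using hf.hasFDerivAt.mul_const c⁻¹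

theorem HasGradientAt.comp_hasDerivAt {f : E → ℝ} {G : E} {x : ℝ → E} {x' : E} {t : ℝ}
    (hf : HasGradientAt f G (x t)) (hx : HasDerivAt x x' t) :
    HasDerivAt (f ∘ x) ⟪G, x'⟫ t := by
  simpa using (hasGradientAt_iff_hasFDerivAt.1 hf).comp_hasDerivAt t hx

theorem hasGradientAt_div_sq_comp_smul {h : E → H} {R : H → ℝ} {α : ℝ} {u : E}
    (hh : DifferentiableAt ℝ h u) (hR : DifferentiableAt ℝ R (α • h u)) :
    HasGradientAt (fun u => R (α • h u) / α ^ 2)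
      (α⁻¹ • (fderiv ℝ h u).adjoint (gradient R (α • h u))) u := by
  have hcomp := (hR.hasGradientAt.comp_hasFDerivAt (k := fun u => α • h u)
    (hh.hasFDerivAt.const_smul α)).div_const (α ^ 2)
  have hval : ∀ A : E →L[ℝ] H, ∀ y : H, (α ^ 2)⁻¹ • (α • A).adjoint y = α⁻¹ • A.adjoint y := by
    intro A y
    rw [map_smul, smul_apply, smul_smul]
    rcases eq_or_ne α 0 with rfl | hα
    · simp
    · congr 1; field_simp
  rw [hval] at hcomp
  exact hcomp

theorem ContinuousLinearMap.sub_norm_sub_mul_le_norm_adjoint_apply {A A₀ : E →L[ℝ] H} {σ : ℝ}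
    (hA₀ : ∀ y, σ * ‖y‖ ≤ ‖A₀.adjoint y‖) (y : H) :
    (σ - ‖A - A₀‖) * ‖y‖ ≤ ‖A.adjoint y‖ := by
  have hdiff : ‖A₀.adjoint y - A.adjoint y‖ ≤ ‖A - A₀‖ * ‖y‖ := by
    rw [← sub_apply, ← map_sub, ← norm_neg, ← neg_apply,
      ← map_neg, neg_sub, ← LinearIsometryEquiv.norm_map ContinuousLinearMap.adjoint (A - A₀)]
    exact ContinuousLinearMap.le_opNorm _ _
  nlinarith [hA₀ y, norm_sub_norm_le (A₀.adjoint y) (A.adjoint y)]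

end GradientCalculus

theorem lt_sq_div_add_of_mul_sqrt_le {c g N ε : ℝ} (hc : 0 < c) (hg : 0 ≤ g) (hε : 0 < ε)
    (hN : c * √g ≤ N) : N < N ^ 2 / (c * √(g + ε)) + c * √ε := by
  have hS : 0 < √(g + ε) := Real.sqrt_pos.2 (by linarith)
  have hsub : √(g + ε) ≤ √g + √ε := by
    rw [Real.sqrt_le_left (by positivity)]
    nlinarith [Real.sq_sqrt hg, Real.sq_sqrt hε.le, Real.sqrt_nonneg g, Real.sqrt_nonneg ε]
  have hε' : 0 < √ε := Real.sqrt_pos.2 hε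
  have hN0 : 0 ≤ N := le_trans (by positivity) hN
  rw [div_add' _ _ _ (by positivity), lt_div_iff₀ (by positivity)]
  rcases le_or_gt (c * √(g + ε)) N with hbig | hsmall
  · nlinarith [mul_pos hc hε', mul_pos (mul_pos hc hε') (mul_pos hc hS)]
  · nlinarith [mul_le_mul_of_nonneg_left hsub hc.le, mul_pos hc hε']

section EnergyDissipation

variable {E : Type*} [NormedAddCommGroup E] [NormedSpace ℝ E] {x v : ℝ → E} {g : ℝ → ℝ}
  {c ρ : ℝ}

theorem norm_sub_le_of_hasDerivAt_neg_norm_sq {T ε : ℝ} (hc : 0 < c) (hε : 0 < ε)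
    (hg : ∀ s, 0 ≤ g s) (hx : ∀ s, 0 ≤ s → HasDerivAt x (v s) s)
    (hgd : ∀ s, 0 ≤ s → HasDerivAt g (-‖v s‖ ^ 2) s)
    (hloj : ∀ s, 0 ≤ s → ‖x s - x 0‖ ≤ ρ → c * √(g s) ≤ ‖v s‖)
    (hT : 2 / c * √(g 0 + ε) + c * √ε * T ≤ ρ) :
    ∀ t ∈ Icc 0 T, ‖x t - x 0‖ ≤ 2 / c * √(g 0 + ε) + c * √ε * t := by
  have hgε : ∀ s, 0 < g s + ε := fun s => by linarith [hg s]
  -- `√(g + ε)` replaces `√g`, which is not differentiable where `g` vanishes; the drift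
  -- `c √ε s` pays for the regularisation.
  set B : ℝ → ℝ := fun s => 2 / c * (√(g 0 + ε) - √(g s + ε)) + c * √ε * s
  set B' : ℝ → ℝ := fun s => ‖v s‖ ^ 2 / (c * √(g s + ε)) + c * √ε
  have hB : ∀ s, 0 ≤ s → HasDerivAt B (B' s) s := by
    intro s hs
    have hsqrt := ((hgd s hs).add_const ε).sqrt (hgε s).ne'
    refine (((hsqrt.const_sub (√(g 0 + ε))).const_mul (2 / c)).add
      ((hasDerivAt_id s).const_mul (c * √ε))).congr_deriv ?_
    have := Real.sqrt_pos.2 (hgε s)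
    simp only [B']
    field_simp
  have hBle : ∀ s, B s ≤ 2 / c * √(g 0 + ε) + c * √ε * s := fun s => by
    have : 0 ≤ 2 / c * √(g s + ε) := by positivity
    simp only [B]; linarith
  intro t ht
  refine le_trans ?_ (hBle t)
  refine image_norm_le_of_norm_deriv_right_lt_deriv_boundary' (f := fun s => x s - x 0)
    (fun s hs => ((hx s hs.1).sub_const _).continuousAt.continuousWithinAt)
    (fun s hs => ((hx s hs.1).sub_const _).hasDerivWithinAt) (by simp [B])
    (fun s hs => (hB s hs.1).continuousAt.continuousWithinAt)
    (fun s hs => (hB s hs.1).hasDerivWithinAt) ?_ ht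
  intro s hs hxs
  have hnear : ‖x s - x 0‖ ≤ ρ := by
    rw [hxs]
    refine (hBle s).trans (le_trans ?_ hT)
    gcongr
    exact hs.2.le
  exact lt_sq_div_add_of_mul_sqrt_le hc (hg s) hε (hloj s hs.1 hnear)

theorem norm_sub_le_sqrt_of_hasDerivAt_neg_norm_sq {μ : ℝ} (hμ : 0 < μ)
    (hg : ∀ s, 0 ≤ g s) (hx : ∀ s, 0 ≤ s → HasDerivAt x (v s) s)
    (hgd : ∀ s, 0 ≤ s → HasDerivAt g (-‖v s‖ ^ 2) s)
    (hpl : ∀ s, 0 ≤ s → ‖x s - x 0‖ ≤ ρ → 2 * μ * g s ≤ ‖v s‖ ^ 2)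
    (hρ : √(2 * g 0 / μ) < ρ) (t : ℝ) (ht : 0 ≤ t) :
    ‖x t - x 0‖ ≤ √(2 * g 0 / μ) := by
  set c := √(2 * μ)
  have hc : 0 < c := Real.sqrt_pos.2 (by positivity)
  have hloj : ∀ s, 0 ≤ s → ‖x s - x 0‖ ≤ ρ → c * √(g s) ≤ ‖v s‖ := fun s hs hxs => by
    rw [← Real.sqrt_mul (by positivity), ← Real.sqrt_sq (norm_nonneg (v s))]
    exact Real.sqrt_le_sqrt (hpl s hs hxs)
  have hc0 : 2 / c * √(g 0) = √(2 * g 0 / μ) := by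
    have hsq : 2 * g 0 / μ = (2 / c) ^ 2 * g 0 := by
      rw [div_pow, Real.sq_sqrt (by positivity)]; field_simp
    rw [hsq, Real.sqrt_mul (by positivity), Real.sqrt_sq (by positivity)]
  set φ : ℝ → ℝ := fun ε => 2 / c * √(g 0 + ε) + c * √ε * t
  have hφ : Tendsto φ (𝓝[>] 0) (𝓝 (√(2 * g 0 / μ))) := by
    rw [← hc0]
    have : Continuous φ := by fun_prop
    simpa [φ] using this.continuousWithinAt.tendsto (x := 0) (s := Ioi 0)
  refine ge_of_tendsto hφ ?_
  filter_upwards [self_mem_nhdsWithin, hφ.eventually (gt_mem_nhds hρ)] with ε hε hφε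
  exact norm_sub_le_of_hasDerivAt_neg_norm_sq hc hε hg hx hgd hloj hφε.le t ⟨ht, le_rfl⟩

end EnergyDissipation

section LazyTraining

variable {E H : Type*} [NormedAddCommGroup E] [InnerProductSpace ℝ E] [CompleteSpace E]
  [NormedAddCommGroup H] [InnerProductSpace ℝ H] [CompleteSpace H] {h : E → H} {R : H → ℝ}

theorem mul_norm_le_norm_adjoint_fderiv_of_lipschitz {L σ : ℝ} {w₀ u : E}
    (hLip : ∀ u v, ‖fderiv ℝ h u - fderiv ℝ h v‖ ≤ L * ‖u - v‖)
    (hσ : ∀ y, σ * ‖y‖ ≤ ‖(fderiv ℝ h w₀).adjoint y‖) (hu : L * ‖u - w₀‖ ≤ σ / 2) (y : H) :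
    σ / 2 * ‖y‖ ≤ ‖(fderiv ℝ h u).adjoint y‖ := by
  refine le_trans ?_ (ContinuousLinearMap.sub_norm_sub_mul_le_norm_adjoint_apply hσ y)
  gcongr
  linarith [hLip u w₀]

theorem two_mul_sub_le_norm_gradient_sq_div_sq_comp_smul {u : E} {α σ μ Rmin : ℝ}
    (hh : DifferentiableAt ℝ h u) (hR : DifferentiableAt ℝ R (α • h u)) (hσ : 0 ≤ σ)
    (hadj : ∀ y, σ * ‖y‖ ≤ ‖(fderiv ℝ h u).adjoint y‖)
    (hPL : 2 * μ * (R (α • h u) - Rmin) ≤ ‖gradient R (α • h u)‖ ^ 2) :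
    2 * (μ * σ ^ 2) * (R (α • h u) / α ^ 2 - Rmin / α ^ 2)
      ≤ ‖gradient (fun u => R (α • h u) / α ^ 2) u‖ ^ 2 := by
  set G := gradient R (α • h u)
  have hsq : σ ^ 2 * ‖G‖ ^ 2 ≤ ‖(fderiv ℝ h u).adjoint G‖ ^ 2 := by
    rw [← mul_pow]; gcongr; exact hadj G
  rw [(hasGradientAt_div_sq_comp_smul hh hR).gradient, norm_smul, mul_pow, norm_inv,
    Real.norm_eq_abs, inv_pow, sq_abs, ← sub_div, ← div_eq_inv_mul, mul_div_assoc']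
  gcongr
  nlinarith [sq_nonneg σ]

theorem norm_sub_le_of_gradient_flow_div_sq_comp_smul {m L σ α : ℝ} {ystar : H} {w₀ : E}
    {w : ℝ → E} (hh : Differentiable ℝ h) (hR : Differentiable ℝ R) (hm : 0 < m)
    (hRconv : StrongConvexOn univ m R) (hmin : ∀ y, R ystar ≤ R y) (hL : 0 < L)
    (hLip : ∀ u v, ‖fderiv ℝ h u - fderiv ℝ h v‖ ≤ L * ‖u - v‖) (hσ : 0 < σ)
    (hσmin : ∀ y, σ * ‖y‖ ≤ ‖(fderiv ℝ h w₀).adjoint y‖) (hw0 : w 0 = w₀)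
    (hflow : ∀ t, 0 ≤ t → HasDerivAt w (-gradient (fun u => R (α • h u) / α ^ 2) (w t)) t)
    (hsmall : √(2 * (R (α • h w₀) / α ^ 2 - R ystar / α ^ 2) / (m * (σ / 2) ^ 2)) < σ / (2 * L))
    (t : ℝ) (ht : 0 ≤ t) :
    ‖w t - w₀‖ ≤ √(2 * (R (α • h w₀) / α ^ 2 - R ystar / α ^ 2) / (m * (σ / 2) ^ 2)) := by
  subst hw0
  set F := fun u => R (α • h u) / α ^ 2
  have hF : Differentiable ℝ F := fun u =>
    (hasGradientAt_div_sq_comp_smul (hh u) (hR _)).differentiableAt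
  refine norm_sub_le_sqrt_of_hasDerivAt_neg_norm_sq (g := fun s => F (w s) - R ystar / α ^ 2)
    (by positivity) (fun s => sub_nonneg.2 ?_) hflow (fun s hs => ?_) (fun s _ hnear => ?_)
    hsmall t ht
  · exact div_le_div_of_nonneg_right (hmin _) (sq_nonneg α)
  · refine (((hF (w s)).hasGradientAt.comp_hasDerivAt (hflow s hs)).sub_const _).congr_deriv ?_
    rw [inner_neg_right, real_inner_self_eq_norm_sq, norm_neg]
  · have hlazy : L * ‖w s - w 0‖ ≤ σ / 2 := by
      rw [le_div_iff₀ (by positivity)] at hnear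
      linarith
    rw [norm_neg]
    exact two_mul_sub_le_norm_gradient_sq_div_sq_comp_smul (hh _) (hR _) (by positivity)
      (mul_norm_le_norm_adjoint_fderiv_of_lipschitz hLip hσmin hlazy)
      (hRconv.mul_sub_le_norm_gradient_sq_s7 hm.le (hR _) ystar)

end LazyTraining

theorem lazy_overparam_param_bound_general
    {p : ℕ} {H : Type*} [NormedAddCommGroup H] [InnerProductSpace ℝ H] [CompleteSpace H]
    (h : EuclideanSpace ℝ (Fin p) → H) (hdiff : Differentiable ℝ h)
    (LDh : ℝ) (hLDh : 0 < LDh)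
    (hDhLip : ∀ u v, ‖fderiv ℝ h u - fderiv ℝ h v‖ ≤ LDh * ‖u - v‖)
    (R : H → ℝ) (hRdiff : Differentiable ℝ R)
    (m M : ℝ) (hm : 0 < m) (hM : 0 < M)
    (hRconv : ConvexOn ℝ Set.univ (fun y => R y - m / 2 * ‖y‖ ^ 2))
    (hRgrad : ∀ y z, ‖gradient R y - gradient R z‖ ≤ M * ‖y - z‖)
    (ystar : H) (hmin : ∀ y, R ystar ≤ R y)
    (w₀ : EuclideanSpace ℝ (Fin p))
    (σmin : ℝ) (hσ : 0 < σmin)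
    (hσmin : ∀ y : H, σmin * ‖y‖ ≤ ‖(fderiv ℝ h w₀).adjoint y‖)
    (C₀ : ℝ)
    (h0 : h w₀ = 0)
    (w : ℝ → ℝ → EuclideanSpace ℝ (Fin p))
    (hw0 : ∀ α : ℝ, ‖ystar‖ / C₀ < α → w α 0 = w₀)
    (hwflow : ∀ α : ℝ, ‖ystar‖ / C₀ < α → ∀ t : ℝ, 0 ≤ t →
      HasDerivAt (w α) (-(gradient (fun u => R (α • h u) / α ^ 2) (w α t))) t) :
    ∃ C > 0, ∃ α₀ : ℝ, ‖ystar‖ / C₀ < α₀ ∧ ∀ α : ℝ, α₀ ≤ α → ∀ t : ℝ, 0 ≤ t →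
      ‖w α t - w₀‖ ≤ C / α := by
  set μ := m * (σmin / 2) ^ 2
  set r := σmin / (2 * LDh)
  set C := √(2 * (M * ‖ystar‖ ^ 2) / μ) + 1
  have hr : 0 < r := by positivity
  refine ⟨C, by positivity, max (‖ystar‖ / C₀ + 1) (C / r + 1), by simp, fun α hα t ht => ?_⟩
  have hαC₀ : ‖ystar‖ / C₀ < α := by linarith [le_max_left (‖ystar‖ / C₀ + 1) (C / r + 1)]
  have hαr : C / r < α := by linarith [le_max_right (‖ystar‖ / C₀ + 1) (C / r + 1)]
  have hα : 0 < α := lt_trans (by positivity) hαr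
  have hcrit : gradient R ystar = 0 := by
    rw [gradient, IsLocalMin.fderiv_eq_zero (Eventually.of_forall hmin), map_zero]
  have hgap : R 0 - R ystar ≤ M * ‖ystar‖ ^ 2 := by
    simpa using sub_le_mul_norm_sub_sq_of_norm_gradient_le hM.le hRdiff
      (fun y => by simpa [hcrit] using hRgrad y ystar) 0
  have hbound : √(2 * (R (α • h w₀) / α ^ 2 - R ystar / α ^ 2) / μ) ≤ (C - 1) / α := by
    rw [h0, smul_zero, ← sub_div, mul_div_assoc', div_right_comm,
      Real.sqrt_div' _ (by positivity), Real.sqrt_sq hα.le, add_sub_cancel_right]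
    gcongr
  have hCα : (C - 1) / α < r := by
    rw [div_lt_iff₀ hα]
    linarith [(div_lt_iff₀ hr).1 hαr, mul_comm α r]
  calc ‖w α t - w₀‖ ≤ √(2 * (R (α • h w₀) / α ^ 2 - R ystar / α ^ 2) / μ) :=
        norm_sub_le_of_gradient_flow_div_sq_comp_smul hdiff hRdiff hm
          (strongConvexOn_iff_convex.2 hRconv) hmin hLDh hDhLip hσ hσmin (hw0 α hαC₀)
          (hwflow α hαC₀) (hbound.trans_lt hCα) t ht
    _ ≤ C / α := hbound.trans (div_le_div_of_nonneg_right (by linarith) hα.le)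

/-- **Theorem 2.3 (Over-parameterized lazy training), laziness of parameters.**
Under the over-parameterization assumptions, if moreover `h(w₀) = 0`, then there are
constants `C > 0` and `α₀ > ‖y⋆‖/C₀` such that for all `α ≥ α₀`,
`sup_{t ≥ 0} ‖w_α(t) − w₀‖ ≤ C / α`. -/
theorem lazy_overparam_param_bound
    {p : ℕ} {H : Type*} [NormedAddCommGroup H] [InnerProductSpace ℝ H] [CompleteSpace H]
    (h : EuclideanSpace ℝ (Fin p) → H) (hdiff : Differentiable ℝ h)
    (LDh : ℝ) (hLDh : 0 < LDh)
    (hDhLip : ∀ u v, ‖fderiv ℝ h u - fderiv ℝ h v‖ ≤ LDh * ‖u - v‖)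
    (R : H → ℝ) (hRnonneg : ∀ y, 0 ≤ R y) (hRdiff : Differentiable ℝ R)
    (m M : ℝ) (hm : 0 < m) (hM : 0 < M)
    (hRconv : ConvexOn ℝ Set.univ (fun y => R y - m / 2 * ‖y‖ ^ 2))
    (hRgrad : ∀ y z, ‖gradient R y - gradient R z‖ ≤ M * ‖y - z‖)
    (ystar : H) (hmin : ∀ y, R ystar ≤ R y)
    (w₀ : EuclideanSpace ℝ (Fin p))
    (σmin : ℝ) (hσ : 0 < σmin)
    (hσmin : ∀ y : H, σmin * ‖y‖ ≤ ‖(fderiv ℝ h w₀).adjoint y‖)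
    (C₀ : ℝ)
    (hC₀ : C₀ = σmin ^ 3 / (32 * (M / m) ^ ((3 : ℝ) / 2) * ‖fderiv ℝ h w₀‖ * LDh))
    (h0 : h w₀ = 0)
    (w : ℝ → ℝ → EuclideanSpace ℝ (Fin p))
    (hw0 : ∀ α : ℝ, ‖ystar‖ / C₀ < α → w α 0 = w₀)
    (hwflow : ∀ α : ℝ, ‖ystar‖ / C₀ < α → ∀ t : ℝ, 0 ≤ t →
      HasDerivAt (w α) (-(gradient (fun u => R (α • h u) / α ^ 2) (w α t))) t) :
    ∃ C > 0, ∃ α₀ : ℝ, ‖ystar‖ / C₀ < α₀ ∧ ∀ α : ℝ, α₀ ≤ α → ∀ t : ℝ, 0 ≤ t →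
      ‖w α t - w₀‖ ≤ C / α :=
  lazy_overparam_param_bound_general h hdiff LDh hLDh hDhLip R hRdiff m M hm hM hRconv hRgrad ystar
    hmin w₀ σmin hσ hσmin C₀ h0 w hw0 hwflow
end
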